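/- arXiv:1810.10913 — 9 statements merged into one kernel-verified Lean document; each statement's English description precedes it below -/
import Mathlib

section
/- Every order automorphism f of A^ω has a fixed point u of the following alternating form: f(u) = u, and for every even index i the entry u i lies in the right copy ω₁ and is not the least element of ω₁, while for every odd index i the entry u i lies in the left copy ω₁* and is not the greatest element of ω₁* (i.e., corresponds to a nonzero countable ordinal). That is, u = (α₀, −α₁, α₂, −α₃, …) with all αᵢ ≠ 0. -/
/-!
Build the fixed point `u` one coordinate at a time, keeping the invariant that `f` preserves the
set of sequences whose first `m` coordinates are lexicographically above `u↾m` (for even `m`),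
respectively below `u↾m` (for odd `m`).

At an even step the sequences `u↾m ⌢ γ`, `γ < ω₁` in the right copy, are cofinal in the complement
of the preserved set, which `f` and `f⁻¹` preserve as well. As countable subsets of `ω₁` are
bounded, some limit `δ < ω₁` is closed under `γ ↦ (an index above f (u↾m ⌢ γ) and f⁻¹ (u↾m ⌢ γ))`.
Then `f` preserves the set of sequences lying below some `u↾m ⌢ γ` with `γ < δ`, and since `δ` is
a limit this is the set of sequences whose first `m + 1` coordinates lie below `u↾m ⌢ δ`.
Odd steps are the same argument in the reversed order: `(A^ω)*` is `(A*)^ω`, and `ω₁` embeds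
cofinally and continuously into `A* = ω₁* + ω₁` through the left copy of `A`.

Finally, a first difference between `f u` and `u` at index `i` would be seen at level `2i + 1` or
`2i + 2`.
-/

open Ordinal

/-- `A = ω₁* + ω₁`. -/
abbrev A : Type := Lex ((Ordinal.ToType ω₁)ᵒᵈ ⊕ Ordinal.ToType ω₁)

open Cardinal Order Set Function OrderDual

theorem countable_Iic_omega_one (γ : ToType ω₁) : (Iic γ).Countable := by
  rw [← Iio_insert, countable_insert, ← le_aleph0_iff_set_countable, ← Order.lt_succ_iff,
    succ_aleph0]
  simpa using mk_Iio_lt γ (by simp)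

theorem exists_forall_lt_of_countable {α : Type*} [LinearOrder α] (hα : ℵ₀ < Order.cof α)
    {s : Set α} (hs : s.Countable) : ∃ b, ∀ x ∈ s, x < b :=
  not_isCofinal_iff.1 fun h => (cof_le h).not_gt ((le_aleph0_iff_set_countable.2 hs).trans_lt hα)

theorem aleph0_lt_cof_omega_one : ℵ₀ < Order.cof (ToType ω₁) := by
  rw [cof_toType, cof_omega_one]
  exact aleph0_lt_aleph_one

instance : Nonempty (ToType ω₁) := by
  rw [nonempty_toType_iff]; exact (isSuccLimit_omega 1).ne_bot

instance : NoMaxOrder (ToType ω₁) := by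
  rw [← isSuccPrelimit_type_lt_iff, type_toType]; exact (isSuccLimit_omega 1).isSuccPrelimit

attribute [local instance] WellFoundedLT.toOrderBot
  WellFoundedLT.conditionallyCompleteLinearOrderBot in
theorem exists_isSuccLimit_forall_lt_imp_lt (h : ToType ω₁ → ToType ω₁) :
    ∃ δ, IsSuccLimit δ ∧ ∀ γ < δ, h γ < δ := by
  choose b hb using fun γ => exists_forall_lt_of_countable aleph0_lt_cof_omega_one
    ((countable_Iic_omega_one γ).union ((countable_Iic_omega_one γ).image h))
  let g : ℕ → ToType ω₁ := fun n => b^[n] (Classical.arbitrary _)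
  have hg_succ (n : ℕ) : g (n + 1) = b (g n) := iterate_succ_apply' _ _ _
  have hg (n : ℕ) : g n < g (n + 1) := hg_succ n ▸ hb _ _ (.inl self_mem_Iic)
  have hgh (n : ℕ) {x} (hx : x ≤ g n) : h x < g (n + 1) := hg_succ n ▸ hb _ _ (.inr ⟨x, hx, rfl⟩)
  obtain ⟨c, hc⟩ := exists_forall_lt_of_countable aleph0_lt_cof_omega_one (countable_range g)
  have hδ : IsLUB (range g) (⨆ n, g n) :=
    isLUB_ciSup ⟨c, forall_mem_range.2 fun n => (hc _ ⟨n, rfl⟩).le⟩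
  have hlt (n : ℕ) : g n < ⨆ n, g n := (hg n).trans_le (hδ.1 ⟨n + 1, rfl⟩)
  refine ⟨_, hδ.isSuccLimit_of_notMem (range_nonempty g) ?_, fun γ hγ => ?_⟩
  · rintro ⟨n, hn⟩; exact (hlt n).ne hn
  · obtain ⟨_, ⟨n, rfl⟩, hn⟩ := (lt_isLUB_iff hδ).1 hγ
    exact (hgh n hn.le).trans (hlt _)

theorem OrderIso.exists_isSuccLimit_invariant_below {α : Type*} [Preorder α] (f : α ≃o α)
    (W : ToType ω₁ → α) (hf : ∀ γ, ∃ γ', f (W γ) < W γ') (hf' : ∀ γ, ∃ γ', f.symm (W γ) < W γ') :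
    ∃ δ, IsSuccLimit δ ∧ ∀ v, (∃ γ < δ, f v < W γ) ↔ (∃ γ < δ, v < W γ) := by
  choose k hk using hf
  choose k' hk' using hf'
  obtain ⟨δ, hδ, hclosed⟩ := exists_isSuccLimit_forall_lt_imp_lt fun γ => max (k γ) (k' γ)
  refine ⟨δ, hδ, fun v => ⟨fun ⟨γ, hγ, hv⟩ => ⟨k' γ, ?_, ?_⟩, fun ⟨γ, hγ, hv⟩ => ⟨k γ, ?_, ?_⟩⟩⟩
  · exact (le_max_right _ _).trans_lt (hclosed γ hγ)
  · exact (f.lt_symm_apply.2 hv).trans (hk' γ)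
  · exact (le_max_left _ _).trans_lt (hclosed γ hγ)
  · exact (f.lt_iff_lt.2 hv).trans (hk γ)

namespace Sum.Lex

variable {α β : Type*} [LinearOrder α] [LinearOrder β]

theorem isNormal_inr : IsNormal (fun b : β => toLex (inr b : α ⊕ β)) := by
  refine ⟨inr_strictMono, fun {a} ha b hb => ?_⟩
  obtain ⟨c, hc⟩ := not_isMin_iff.1 ha.not_isMin
  have hcb : toLex (inr c) ≤ b := hb ⟨c, hc, rfl⟩
  rcases b with b | b
  · exact absurd hcb not_inr_le_inl
  · exact inr_le_inr_iff.2 (ha.isLUB_Iio.2 fun x hx => inr_le_inr_iff.1 (hb ⟨x, hx, rfl⟩))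

theorem exists_lt_inr [Nonempty β] [NoMaxOrder β] (x : α ⊕ₗ β) : ∃ b, x < toLex (inr b) := by
  rcases x with a | b
  · exact ⟨Classical.arbitrary β, inl_lt_inr _ _⟩
  · exact (exists_gt b).imp fun _ => inr_lt_inr_iff.2

theorem isNormal_toDual_inl : IsNormal (fun a : α => toDual (toLex (inl (toDual a) : αᵒᵈ ⊕ β))) :=
  (OrderIso.sumLexDualAntidistrib αᵒᵈ β).symm.isNormal.comp
    (isNormal_inr.comp (OrderIso.dualDual α).isNormal)

theorem exists_lt_toDual_inl [Nonempty α] [NoMaxOrder α] (x : (αᵒᵈ ⊕ₗ β)ᵒᵈ) :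
    ∃ a, x < toDual (toLex (inl (toDual a))) :=
  (exists_lt_inr (OrderIso.sumLexDualAntidistrib αᵒᵈ β x)).imp fun _ ha =>
    (OrderIso.sumLexDualAntidistrib αᵒᵈ β).lt_symm_apply.2 ha

end Sum.Lex

section PrefixLT

variable {β : Type*}

/-- `x↾m < y↾m` lexicographically. -/
def PrefixLT [LT β] (m : ℕ) (x y : ℕ → β) : Prop :=
  ∃ i < m, (∀ j < i, x j = y j) ∧ x i < y i

theorem not_prefixLT_zero [LT β] (x y : ℕ → β) : ¬ PrefixLT 0 x y :=
  fun ⟨_, hi, _⟩ => Nat.not_lt_zero _ hi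

theorem prefixLT_toDual_iff [LT β] {m : ℕ} {x y : ℕ → β} :
    PrefixLT m (fun i => toDual (x i)) (fun i => toDual (y i)) ↔ PrefixLT m y x :=
  ⟨fun ⟨i, hi, h, hlt⟩ => ⟨i, hi, fun j hj => (h j hj).symm, hlt⟩,
    fun ⟨i, hi, h, hlt⟩ => ⟨i, hi, fun j hj => (h j hj).symm, hlt⟩⟩

theorem Pi.toLex_lt_toLex_iff {ι : Type*} [LT ι] [LT β] {x y : ι → β} :
    toLex x < toLex y ↔ ∃ i, (∀ j < i, x j = y j) ∧ x i < y i :=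
  Iff.rfl

variable [LinearOrder β]

theorem PrefixLT.of_eqOn {m : ℕ} {x x' y y' : ℕ → β} (hx : ∀ j < m, x j = x' j)
    (hy : ∀ j < m, y j = y' j) : PrefixLT m x y → PrefixLT m x' y' :=
  fun ⟨i, hi, h, hlt⟩ => ⟨i, hi, fun j hj => (hx j (hj.trans hi)).symm.trans
    ((h j hj).trans (hy j (hj.trans hi))), hx i hi ▸ hy i hi ▸ hlt⟩

theorem prefixLT_congr {m : ℕ} {x x' y y' : ℕ → β} (hx : ∀ j < m, x j = x' j)
    (hy : ∀ j < m, y j = y' j) : PrefixLT m x y ↔ PrefixLT m x' y' :=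
  ⟨.of_eqOn hx hy, .of_eqOn (fun j hj => (hx j hj).symm) (fun j hj => (hy j hj).symm)⟩

theorem not_prefixLT_of_eqOn {m : ℕ} {x y : ℕ → β} (h : ∀ j < m, x j = y j) : ¬ PrefixLT m x y :=
  fun hxy => (hxy.of_eqOn h fun _ _ => rfl).elim fun _ ⟨_, _, hlt⟩ => hlt.false

theorem prefixLT_trichotomy (m : ℕ) (x y : ℕ → β) :
    PrefixLT m x y ∨ (∀ j < m, x j = y j) ∨ PrefixLT m y x := by
  rcases lt_trichotomy (toLex x) (toLex y) with ⟨i, h, hlt⟩ | hxy | ⟨i, h, hlt⟩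
  · by_cases hi : i < m
    · exact .inl ⟨i, hi, h, hlt⟩
    · exact .inr (.inl fun j hj => h j (hj.trans_le (not_lt.1 hi)))
  · exact .inr (.inl fun j _ => congrFun (toLex.injective hxy) j)
  · by_cases hi : i < m
    · exact .inr (.inr ⟨i, hi, h, hlt⟩)
    · exact .inr (.inl fun j hj => (h j (hj.trans_le (not_lt.1 hi))).symm)

theorem toLex_lt_update_of_not_prefixLT {m : ℕ} {v w : ℕ → β} (hv : ¬ PrefixLT m w v) {c : β}
    (hc : v m < c) : toLex v < toLex (update w m c) := by
  rw [Pi.toLex_lt_toLex_iff]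
  rcases prefixLT_trichotomy m v w with ⟨i, hi, h, hlt⟩ | h | h
  · refine ⟨i, fun j hj => ?_, ?_⟩
    · rw [update_of_ne (by omega)]; exact h j hj
    · rwa [update_of_ne hi.ne]
  · refine ⟨m, fun j hj => ?_, ?_⟩
    · rw [update_of_ne hj.ne]; exact h j hj
    · rwa [update_self]
  · exact absurd h hv

theorem prefixLT_succ_update_iff {ι : Type*} [LinearOrder ι] {e : ι → β} (he : IsNormal e)
    {δ : ι} (hδ : IsSuccLimit δ) {m : ℕ} {v w : ℕ → β} :
    PrefixLT (m + 1) v (update w m (e δ)) ↔ ∃ γ < δ, toLex v < toLex (update w m (e γ)) := by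
  have hagree {b b' : β} {i : ℕ} (h : ∀ j < i, v j = update w m b j) (hi : i ≤ m) :
      ∀ j < i, v j = update w m b' j := fun j hj => by
    rw [h j hj, update_of_ne (by omega), update_of_ne (by omega)]
  constructor
  · rintro ⟨i, hi, h, hlt⟩
    rcases (Nat.lt_succ_iff.1 hi).lt_or_eq with hi | rfl
    · obtain ⟨γ, hγ⟩ := not_isMin_iff.1 hδ.not_isMin
      rw [update_of_ne hi.ne] at hlt
      exact ⟨γ, hγ, Pi.toLex_lt_toLex_iff.2 ⟨i, hagree h hi.le, by rwa [update_of_ne hi.ne]⟩⟩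
    · rw [update_self] at hlt
      obtain ⟨γ, hγ, hlt⟩ := (he.lt_iff_exists_lt hδ).1 hlt
      exact ⟨γ, hγ, Pi.toLex_lt_toLex_iff.2 ⟨i, hagree h le_rfl, by rwa [update_self]⟩⟩
  · rintro ⟨γ, hγ, hv⟩
    obtain ⟨i, h, hlt⟩ := Pi.toLex_lt_toLex_iff.1 hv
    have heδ := he.strictMono hγ
    rcases lt_trichotomy i m with hi | rfl | hi
    · exact ⟨i, by omega, hagree h hi.le, by rwa [update_of_ne hi.ne] at hlt ⊢⟩
    · refine ⟨i, by omega, hagree h le_rfl, ?_⟩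
      rw [update_self] at hlt ⊢
      exact hlt.trans heδ
    · refine ⟨m, by omega, hagree (fun j hj => h j (hj.trans hi)) le_rfl, ?_⟩
      rw [update_self, h m hi, update_self]
      exact heδ

theorem exists_isSuccLimit_invariant_prefixLT_update {e : ToType ω₁ → β} (he : IsNormal e)
    (he' : ∀ b, ∃ γ, b < e γ) (f : Lex (ℕ → β) ≃o Lex (ℕ → β)) {m : ℕ} {w : ℕ → β}
    (hw : ∀ v, PrefixLT m w (ofLex (f v)) ↔ PrefixLT m w (ofLex v)) :
    ∃ δ, IsSuccLimit δ ∧ ∀ v, PrefixLT (m + 1) (ofLex (f v)) (update w m (e δ)) ↔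
      PrefixLT (m + 1) (ofLex v) (update w m (e δ)) := by
  have hW (γ) : ¬ PrefixLT m w (update w m (e γ)) :=
    not_prefixLT_of_eqOn fun j hj => (update_of_ne hj.ne _ _).symm
  have hcof (v) (hv : ¬ PrefixLT m w (ofLex v)) : ∃ γ, v < toLex (update w m (e γ)) :=
    (he' (ofLex v m)).imp fun _ => toLex_lt_update_of_not_prefixLT hv
  obtain ⟨δ, hδ, hiff⟩ := f.exists_isSuccLimit_invariant_below (fun γ => toLex (update w m (e γ)))
    (fun γ => hcof _ ((hw _).not.2 (hW γ)))
    (fun γ => hcof _ (by rw [← hw, f.apply_symm_apply]; exact hW γ))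
  exact ⟨δ, hδ, fun v => by
    rw [prefixLT_succ_update_iff he hδ, prefixLT_succ_update_iff he hδ]; exact hiff v⟩

variable (β) in
def Pi.lexDualOrderIso (ι : Type*) [LinearOrder ι] [WellFoundedLT ι] :
    Lex (ι → βᵒᵈ) ≃o (Lex (ι → β))ᵒᵈ :=
  OrderIso.ofRelIsoLT
    { toEquiv := ofLex.trans ((Equiv.piCongrRight fun _ => ofDual).trans (toLex.trans toDual))
      map_rel_iff' := ⟨fun ⟨i, h, hlt⟩ => ⟨i, fun j hj => (h j hj).symm, hlt⟩,
        fun ⟨i, h, hlt⟩ => ⟨i, fun j hj => (h j hj).symm, hlt⟩⟩ }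

theorem exists_isSuccLimit_invariant_prefixGT_update {e : ToType ω₁ → βᵒᵈ} (he : IsNormal e)
    (he' : ∀ b, ∃ γ, b < e γ) (f : Lex (ℕ → β) ≃o Lex (ℕ → β)) {m : ℕ} {w : ℕ → β}
    (hw : ∀ v, PrefixLT m (ofLex (f v)) w ↔ PrefixLT m (ofLex v) w) :
    ∃ δ, IsSuccLimit δ ∧ ∀ v, PrefixLT (m + 1) (update w m (ofDual (e δ))) (ofLex (f v)) ↔
      PrefixLT (m + 1) (update w m (ofDual (e δ))) (ofLex v) := by
  let Φ := Pi.lexDualOrderIso β ℕ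
  obtain ⟨δ, hδ, h⟩ := exists_isSuccLimit_invariant_prefixLT_update he he'
    (Φ.trans (f.dual.trans Φ.symm)) (w := fun i => toDual (w i))
    (fun v => prefixLT_toDual_iff.trans ((hw _).trans prefixLT_toDual_iff.symm))
  exact ⟨δ, hδ, fun v => (prefixLT_toDual_iff (β := β)).symm.trans
    ((h (Φ.symm (toDual v))).trans (prefixLT_toDual_iff (β := β)))⟩

variable (f : Lex (ℕ → β) ≃o Lex (ℕ → β))

def PrefixInvariant (m : ℕ) (w : ℕ → β) : Prop :=
  (Even m → ∀ v, PrefixLT m w (ofLex (f v)) ↔ PrefixLT m w (ofLex v)) ∧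
    (Odd m → ∀ v, PrefixLT m (ofLex (f v)) w ↔ PrefixLT m (ofLex v) w)

variable {f}

theorem PrefixInvariant.congr {m : ℕ} {w w' : ℕ → β} (h : ∀ j < m, w j = w' j)
    (hw : PrefixInvariant f m w) : PrefixInvariant f m w' :=
  ⟨fun hm v => by simpa only [prefixLT_congr h (fun _ _ => rfl)] using hw.1 hm v,
    fun hm v => by simpa only [prefixLT_congr (fun _ _ => rfl) h] using hw.2 hm v⟩

theorem prefixInvariant_zero (w : ℕ → β) : PrefixInvariant f 0 w :=
  ⟨fun _ _ => iff_of_false (not_prefixLT_zero _ _) (not_prefixLT_zero _ _),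
    fun h => absurd h Nat.not_odd_zero⟩

theorem apply_eq_of_forall_prefixInvariant {u : Lex (ℕ → β)}
    (hu : ∀ m, PrefixInvariant f m (ofLex u)) : f u = u := by
  have hirrefl (m : ℕ) : ¬ PrefixLT m (ofLex u) (ofLex u) := not_prefixLT_of_eqOn fun _ _ => rfl
  rcases lt_trichotomy (f u) u with hlt | h | hlt
  · obtain ⟨i, h, hlt⟩ := Pi.toLex_lt_toLex_iff.1 hlt
    exact absurd ((((hu (2 * i + 1)).2 (odd_two_mul_add_one i)) u).1 ⟨i, by omega, h, hlt⟩)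
      (hirrefl _)
  · exact h
  · obtain ⟨i, h, hlt⟩ := Pi.toLex_lt_toLex_iff.1 hlt
    exact absurd ((((hu (2 * i + 2)).1 ⟨i + 1, by ring⟩) u).1 ⟨i, by omega, h, hlt⟩)
      (hirrefl _)

end PrefixLT

theorem exists_forall_of_exists_update {β : Type*} (P : ℕ → (ℕ → β) → Prop) (Q : ℕ → β → Prop)
    (hP : ∀ m w w', (∀ j < m, w j = w' j) → P m w → P m w') {w₀ : ℕ → β} (h₀ : P 0 w₀)
    (hstep : ∀ m w, P m w → ∃ b, P (m + 1) (update w m b) ∧ Q m b) :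
    ∃ u, ∀ m, P m u ∧ Q m (u m) := by
  choose b hb using hstep
  let s : (m : ℕ) → {w // P m w} :=
    Nat.rec ⟨w₀, h₀⟩ fun m w => ⟨update w.1 m (b m w.1 w.2), (hb m w.1 w.2).1⟩
  have hs (m : ℕ) : ∀ j < m, (s m).1 j = (s (j + 1)).1 j := by
    induction m with
    | zero => intro j hj; omega
    | succ m ih =>
      intro j hj
      rcases (Nat.lt_succ_iff.1 hj).lt_or_eq with hj | rfl
      · exact (update_of_ne hj.ne _ _).trans (ih j hj)
      · rfl
  refine ⟨fun j => (s (j + 1)).1 j, fun m => ⟨hP m _ _ (hs m) (s m).2, ?_⟩⟩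
  show Q m ((s (m + 1)).1 m)
  rw [show (s (m + 1)).1 m = b m (s m).1 (s m).2 from update_self _ _ _]
  exact (hb m _ _).2

def AlternatingEntry (m : ℕ) (a : A) : Prop :=
  (Even m → ∃ α : ToType ω₁, ¬ IsMin α ∧ a = toLex (Sum.inr α)) ∧
    (Odd m → ∃ β : (ToType ω₁)ᵒᵈ, ¬ IsMax β ∧ a = toLex (Sum.inl β))

theorem exists_update_prefixInvariant (f : Lex (ℕ → A) ≃o Lex (ℕ → A)) {m : ℕ} {w : ℕ → A}
    (hw : PrefixInvariant f m w) :
    ∃ a, PrefixInvariant f (m + 1) (update w m a) ∧ AlternatingEntry m a := by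
  rcases Nat.even_or_odd m with hm | hm
  · obtain ⟨δ, hδ, h⟩ := exists_isSuccLimit_invariant_prefixLT_update Sum.Lex.isNormal_inr
      Sum.Lex.exists_lt_inr f (hw.1 hm)
    exact ⟨_, ⟨fun hm' => absurd hm' (Nat.not_even_iff_odd.2 hm.add_one), fun _ => h⟩,
      fun _ => ⟨δ, hδ.not_isMin, rfl⟩, fun hm' => absurd hm (Nat.not_even_iff_odd.2 hm')⟩
  · obtain ⟨δ, hδ, h⟩ := exists_isSuccLimit_invariant_prefixGT_update
      Sum.Lex.isNormal_toDual_inl Sum.Lex.exists_lt_toDual_inl f (hw.2 hm)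
    exact ⟨_, ⟨fun _ => h, fun hm' => absurd hm' (Nat.not_odd_iff_even.2 hm.add_one)⟩,
      fun hm' => absurd hm (Nat.not_odd_iff_even.2 hm'), fun _ => ⟨toDual δ, hδ.not_isMin, rfl⟩⟩

/-- Every order automorphism of `A^ω` (sequences `ℕ → A` ordered
lexicographically) has a fixed point `u = (α₀, -α₁, α₂, -α₃, …)` whose even
entries lie in the right copy of `ω₁` and are not its least element, and whose
odd entries lie in the left copy `ω₁*` and are not its greatest element. -/
theorem automorphism_fixed_point (f : Lex (ℕ → A) ≃o Lex (ℕ → A)) :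
    ∃ u : Lex (ℕ → A), f u = u ∧
      (∀ i : ℕ, Even i →
        ∃ α : Ordinal.ToType ω₁, ¬ IsMin α ∧ ofLex u i = toLex (Sum.inr α)) ∧
      (∀ i : ℕ, Odd i →
        ∃ β : (Ordinal.ToType ω₁)ᵒᵈ, ¬ IsMax β ∧ ofLex u i = toLex (Sum.inl β)) := by
  obtain ⟨u, hu⟩ := exists_forall_of_exists_update (PrefixInvariant f) AlternatingEntry
    (fun _ _ _ => PrefixInvariant.congr)
    (prefixInvariant_zero fun _ => toLex (Sum.inr (Classical.arbitrary _)))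
    (fun _ _ => exists_update_prefixInvariant f)
  exact ⟨toLex u, apply_eq_of_forall_prefixInvariant fun m => (hu m).1,
    fun i hi => (hu i).2.1 hi, fun i hi => (hu i).2.2 hi⟩
end

section
/- Let u : ℕ → A be a sequence such that for every even index i the entry u i lies in the right copy ω₁ and is not the least element of ω₁, and for every odd index i the entry u i lies in the left copy ω₁* and is not the greatest element of ω₁*. Then for every a ∈ A, the sequence u is not 2-tail-equivalent to the sequence a::u; equivalently, the 2-tail-equivalence classes [u]₂ and [a::u]₂ are disjoint. -/
/-!
If `u = r ++ w` and `a :: u = s ++ w`, comparing the entry `w 1` of the common tail in both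
sequences gives `u (|r| + 1) = u |s|`. When `|r| ≡ |s| (mod 2)` these two indices have opposite
parity, so one entry lies in the copy `ω₁` and the other in the copy `ω₁*`, which is absurd.
-/

open Ordinal

/-- The sequence with first entry `a` followed by the entries of `u`. -/
def consSeq {α : Type*} (a : α) (u : ℕ → α) : ℕ → α
  | 0 => a
  | n + 1 => u n

/-- The sequence obtained by prepending the finite list `r` to the sequence `u`. -/
def appendSeq {α : Type*} : List α → (ℕ → α) → ℕ → α
  | [], u => u
  | a :: r, u => consSeq a (appendSeq r u)

theorem appendSeq_add_length {α : Type*} (r : List α) (w : ℕ → α) (n : ℕ) :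
    appendSeq r w (n + r.length) = w n := by
  induction r with
  | nil => rfl
  | cons a r ih => exact ih

theorem apply_length_add_one_eq_of_appendSeq {α : Type*} {u w : ℕ → α} {a : α}
    {r s : List α} (hu : u = appendSeq r w) (hcons : consSeq a u = appendSeq s w) :
    u (r.length + 1) = u s.length := by
  calc u (r.length + 1) = w 1 := by rw [Nat.add_comm, hu, appendSeq_add_length]
    _ = consSeq a u (1 + s.length) := by rw [hcons, appendSeq_add_length]
    _ = u s.length := by rw [Nat.add_comm]; rfl

theorem apply_ne_apply_of_odd_add {X Y : Type*} {u : ℕ → Lex (X ⊕ Y)}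
    (heven : ∀ i, Even i → ∃ y, u i = toLex (Sum.inr y))
    (hodd : ∀ i, Odd i → ∃ x, u i = toLex (Sum.inl x))
    {i j : ℕ} (hij : Odd (i + j)) : u i ≠ u j := by
  rcases Nat.even_or_odd i with hi | hi
  · obtain ⟨y, hy⟩ := heven i hi
    obtain ⟨x, hx⟩ := hodd j ((Nat.odd_add'.mp hij).mpr hi)
    simp [hy, hx]
  · obtain ⟨x, hx⟩ := hodd i hi
    obtain ⟨y, hy⟩ := heven j (by simpa [Nat.odd_add', Nat.not_even_iff_odd.mpr hi] using hij)
    simp [hy, hx]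

/-- If `u : ℕ → A` has even entries in the right copy of `ω₁` (not its least
element) and odd entries in the left copy `ω₁*` (not its greatest element),
then for every `a : A` the sequences `u` and `a::u` are not 2-tail-equivalent. -/
theorem not_two_tail_equivalent_cons (u : ℕ → A)
    (heven : ∀ i : ℕ, Even i →
      ∃ α : Ordinal.ToType ω₁, ¬ IsMin α ∧ u i = toLex (Sum.inr α))
    (hodd : ∀ i : ℕ, Odd i →
      ∃ β : (Ordinal.ToType ω₁)ᵒᵈ, ¬ IsMax β ∧ u i = toLex (Sum.inl β))
    (a : A) :
    ¬ ∃ (r s : List A) (w : ℕ → A), r.length % 2 = s.length % 2 ∧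
        u = appendSeq r w ∧ consSeq a u = appendSeq s w := by
  rintro ⟨r, s, w, hpar, hu, hcons⟩
  have hparity : Odd (r.length + 1 + s.length) := Nat.odd_iff.mpr (by omega)
  exact apply_ne_apply_of_odd_add (fun i hi => (heven i hi).imp fun _ => And.right)
    (fun i hi => (hodd i hi).imp fun _ => And.right) hparity
    (apply_length_add_one_eq_of_appendSeq hu hcons)
end

section
/- Let A be a nonempty linear order and let (I u) for u : ℕ → A be a family of linear orders such that for every a ∈ A and every u, the order I (a::u) is order-isomorphic to I u (equivalently, I is constant up to order isomorphism on tail-equivalence classes). Then the replacement X = Σₗ (u : A^ω), I u satisfies A ×ₗ X ≅ X; that is, X is invariant under left multiplication by A. -/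
/-!
Comparing `a::u` with `b::v` lexicographically means comparing `a` with `b` first and then `u`
with `v`, so `(a, u) ↦ a::u` is an order isomorphism `A ×ₗ A^ω ≃o A^ω`. Reassociating,
`A ×ₗ Σₗ u, I u ≃o Σₗ (a, u) : A ×ₗ A^ω, I u`, and reindexing this sum along `(a, u) ↦ a::u`,
with the fibres identified by `I u ≃o I (a::u)`, yields `Σₗ v : A^ω, I v`.
-/

theorem consSeq_head_tail {α : Type*} (u : ℕ → α) : consSeq (u 0) (fun n => u (n + 1)) = u := by
  funext n
  cases n <;> rfl

theorem strictMono_toLex_consSeq (α : Type*) [PartialOrder α] :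
    StrictMono fun p : α ×ₗ Lex (ℕ → α) => toLex (consSeq (ofLex p).1 (ofLex (ofLex p).2)) := by
  rintro ⟨a, u⟩ ⟨b, v⟩ h
  rcases Prod.Lex.lt_iff.mp h with hab | ⟨rfl, i, hi, huv⟩
  · exact ⟨0, fun j hj => absurd hj j.not_lt_zero, hab⟩
  · refine ⟨i + 1, fun j hj => ?_, huv⟩
    cases j with
    | zero => rfl
    | succ j => exact hi j (Nat.succ_lt_succ_iff.mp hj)

namespace OrderIso

noncomputable def consSeqLex (α : Type*) [LinearOrder α] : α ×ₗ Lex (ℕ → α) ≃o Lex (ℕ → α) :=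
  (strictMono_toLex_consSeq α).orderIsoOfRightInverse _
    (fun u => toLex (ofLex u 0, toLex fun n => ofLex u (n + 1))) fun u => consSeq_head_tail u

def sigmaLexCongr {α β : Type*} {I : α → Type*} {J : β → Type*} [LinearOrder α] [Preorder β]
    [∀ a, LinearOrder (I a)] [∀ b, Preorder (J b)] (e : α ≃o β) (F : ∀ a, I a ≃o J (e a)) :
    (Σₗ a, I a) ≃o Σₗ b, J b :=
  StrictMono.orderIsoOfRightInverse
    (fun x => toLex (Equiv.sigmaCongr e.toEquiv (fun a => (F a).toEquiv) (ofLex x)))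
    (by
      rintro ⟨a, x⟩ ⟨b, y⟩ (⟨_, _, hab⟩ | ⟨_, _, hxy⟩)
      · exact Sigma.Lex.left _ _ (e.strictMono hab)
      · exact Sigma.Lex.right _ _ ((F _).strictMono hxy))
    (fun y => toLex ((Equiv.sigmaCongr _ _).symm (ofLex y)))
    fun y => congrArg toLex ((Equiv.sigmaCongr _ _).apply_symm_apply (ofLex y))

def prodLexSigmaLexAssoc (α : Type*) {β : Type*} (I : β → Type*) [LinearOrder α]
    [LinearOrder β] [∀ b, LinearOrder (I b)] :
    α ×ₗ (Σₗ b, I b) ≃o Σₗ p : α ×ₗ β, I (ofLex p).2 :=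
  StrictMono.orderIsoOfRightInverse
    (fun x => toLex ⟨toLex ((ofLex x).1, (ofLex (ofLex x).2).1), (ofLex (ofLex x).2).2⟩)
    (by
      rintro ⟨a, b, x⟩ ⟨a', b', x'⟩ h
      rcases Prod.Lex.lt_iff.mp h with ha | ⟨rfl, ⟨_, _, hb⟩ | ⟨_, _, hx⟩⟩
      · exact Sigma.Lex.left _ _ (Prod.Lex.lt_iff.mpr (Or.inl ha))
      · exact Sigma.Lex.left _ _ (Prod.Lex.lt_iff.mpr (Or.inr ⟨rfl, hb⟩))
      · exact Sigma.Lex.right _ _ hx)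
    (fun y => toLex ((ofLex (ofLex y).1).1, toLex ⟨(ofLex (ofLex y).1).2, (ofLex y).2⟩))
    fun _ => rfl

end OrderIso

theorem replacement_invariant_left_mul_general (A : Type*) [LinearOrder A]
    (I : (ℕ → A) → Type*) [∀ u, LinearOrder (I u)]
    (h : ∀ (a : A) (u : ℕ → A), Nonempty (I (consSeq a u) ≃o I u)) :
    Nonempty
      (Lex (A × Lex (Σ u : Lex (ℕ → A), I (ofLex u))) ≃o
        Lex (Σ u : Lex (ℕ → A), I (ofLex u))) :=
  ⟨(OrderIso.prodLexSigmaLexAssoc A _).trans <|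
    OrderIso.sigmaLexCongr (J := fun u => I (ofLex u)) (OrderIso.consSeqLex A) fun p =>
      (h (ofLex p).1 (ofLex (ofLex p).2)).some.symm⟩

/-- If the fibers `I u` are constant up to order isomorphism on
tail-equivalence classes (i.e. `I (a::u) ≅ I u` for all `a`, `u`), then the
replacement `X = Σₗ (u : A^ω), I u` satisfies `A ×ₗ X ≅ X`. -/
theorem replacement_invariant_left_mul (A : Type*) [LinearOrder A] [Nonempty A]
    (I : (ℕ → A) → Type*) [∀ u, LinearOrder (I u)]
    (h : ∀ (a : A) (u : ℕ → A), Nonempty (I (consSeq a u) ≃o I u)) :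
    Nonempty
      (Lex (A × Lex (Σ u : Lex (ℕ → A), I (ofLex u))) ≃o
        Lex (Σ u : Lex (ℕ → A), I (ofLex u))) :=
  replacement_invariant_left_mul_general A I h
end

section
/- The linear orders L_i (i ∈ ℤ) are pairwise non-isomorphic: for all integers i ≠ j, there is no order isomorphism between L_i and L_j. -/
/-!
For a point `x` of a linear order, the order types of the well-ordered intervals `[z, x)` form an
isomorphism invariant. In `L i` every final segment starting at a block is isomorphic to an
ordinal, so these types are differences of ordinal coordinates. At the first point `x` of the
rightmost block, the interval starting at the first point of the block `ω^a·(a-i)` has type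
`ω^a·(a-i) + δ` with `δ < ω^a`. In `L j`, on the other hand, for any point `x` and all large `a`
no interval `[z, x)` has type in `[ω^a·(a-j+1), ω^(a+1))`: if `z` lies in the block `ω^a·(a-j)` or
to its right the type is below `ω^a·(a-j) + ω^a`, and otherwise `[z, x)` contains the end of a
block with a larger exponent, so its type is at least `ω^(a+1)`. For `i < j` these clash.
-/

open Ordinal

/-- Exponent of the `j`-th term (from the right, counting from `j = 0`) of `L i`. -/
def e (i : ℤ) (j : ℕ) : ℕ := ((j : ℤ) + 1 + max i 0).toNat

/-- Coefficient of the `j`-th term (from the right, counting from `j = 0`) of `L i`. -/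
def c (i : ℤ) (j : ℕ) : ℕ := ((j : ℤ) + 1 + max (-i) 0).toNat

/-- The order `L i = … + c₂·ω^{e₂} + c₁·ω^{e₁} + c₀·ω^{e₀} + ω^ω`: an
`ω*`-indexed sum of ordinals followed on the right by a copy of `ω^ω`. -/
abbrev L (i : ℤ) : Type :=
  ((Lex (Σ j : ℕ, (Ordinal.ToType (ω ^ (e i j) * (c i j)))ᵒᵈ))ᵒᵈ) ⊕ₗ Ordinal.ToType (ω ^ ω)

open Set Filter

universe u

def icoTypes {α : Type u} [LinearOrder α] (x : α) : Set Ordinal.{u} :=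
  {o | ∃ z ≤ x, Nonempty (Ico z x ≃o o.ToType)}

theorem OrderIso.icoTypes_subset {α β : Type u} [LinearOrder α] [LinearOrder β] (f : α ≃o β)
    (x : α) : icoTypes x ⊆ icoTypes (f x) := by
  rintro o ⟨z, hzx, ⟨g⟩⟩
  exact ⟨f z, f.monotone hzx,
    ⟨((StrictMonoOn.orderIso f (Ico z x) (f.strictMono.strictMonoOn _)).trans
      (OrderIso.setCongr _ _ (f.image_Ico z x))).symm.trans g⟩⟩

theorem Ordinal.nonempty_Ico_orderIso_toType (a b : Ordinal.{u}) :
    Nonempty (Ico a b ≃o (b - a).ToType) := by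
  let e : Ico a b ≃ Iio (b - a) :=
    { toFun w := ⟨w - a, (sub_lt_of_le w.2.1).2 <| by
        rw [Ordinal.add_sub_cancel_of_le (w.2.1.trans w.2.2.le)]; exact w.2.2⟩
      invFun t := ⟨a + t, le_self_add, lt_sub.1 t.2⟩
      left_inv w := Subtype.ext (Ordinal.add_sub_cancel_of_le w.2.1)
      right_inv t := Subtype.ext (Ordinal.add_sub_cancel a t) }
  exact ⟨(e.toOrderIso (fun _ w' (h : _ ≤ w'.1) => sub_le.2 (h.trans (le_add_sub w'.1 a)))
    (fun _ _ h => add_le_add_right (α := Ordinal) h a)).trans ToType.mk⟩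

theorem StrictMonoOn.image_Ico_eq {α β : Type*} [LinearOrder α] [Preorder β] {s : Set α}
    [s.OrdConnected] {g : α → β} (hg : StrictMonoOn g s) (hs : (g '' s).OrdConnected)
    {z x : α} (hz : z ∈ s) (hx : x ∈ s) : g '' Ico z x = Ico (g z) (g x) := by
  have hsub : Ico z x ⊆ s := Ico_subset_Icc_self.trans (s.Icc_subset hz hx)
  apply Subset.antisymm
  · rintro _ ⟨w, hw, rfl⟩
    exact ⟨(hg.le_iff_le hz (hsub hw)).2 hw.1, hg.lt_iff_lt (hsub hw) hx |>.2 hw.2⟩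
  · intro o ho
    obtain ⟨w, hw, rfl⟩ := hs.out ⟨z, hz, rfl⟩ ⟨x, hx, rfl⟩ (Ico_subset_Icc_self ho)
    exact ⟨w, ⟨(hg.le_iff_le hz hw).1 ho.1, (hg.lt_iff_lt hw hx).1 ho.2⟩, rfl⟩

theorem StrictMonoOn.nonempty_Ico_orderIso {α : Type u} [LinearOrder α] {s : Set α}
    [s.OrdConnected] {g : α → Ordinal.{u}} (hg : StrictMonoOn g s) (hs : (g '' s).OrdConnected)
    {z x : α} (hz : z ∈ s) (hx : x ∈ s) : Nonempty (Ico z x ≃o (g x - g z).ToType) :=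
  have hsub : Ico z x ⊆ s := Ico_subset_Icc_self.trans (s.Icc_subset hz hx)
  (nonempty_Ico_orderIso_toType _ _).map fun e =>
    ((hg.mono hsub).orderIso g _).trans <|
      (OrderIso.setCongr _ _ (hg.image_Ico_eq hs hz hx)).trans e

theorem Ordinal.eq_of_toType_orderIso {o o' : Ordinal.{u}} (e : o.ToType ≃o o'.ToType) :
    o = o' := by
  simpa only [type_toType] using e.toRelIsoLT.ordinalType_congr

theorem Ordinal.lt_or_exists_eq_add_of_lt_add {o a r : Ordinal.{u}} (h : o < a + r) :
    o < a ∨ ∃ o' < r, o = a + o' := by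
  refine (lt_or_ge o a).imp id fun hao => ⟨o - a, (sub_lt_of_le hao).2 h, ?_⟩
  exact (Ordinal.add_sub_cancel_of_le hao).symm

abbrev OmegaStarSum (B : ℕ → Ordinal.{u}) (T : Ordinal.{u}) : Type u :=
  (Lex (Σ k, ((B k).ToType)ᵒᵈ))ᵒᵈ ⊕ₗ T.ToType

def blockSum (B : ℕ → Ordinal.{u}) (k : ℕ) : ℕ → Ordinal.{u}
  | 0 => 0
  | n + 1 => B (k + n) + blockSum B k n

section blockSum

variable (B : ℕ → Ordinal.{u})

theorem blockSum_add (k m n : ℕ) :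
    blockSum B k (m + n) = blockSum B (k + n) m + blockSum B k n := by
  induction m with
  | zero => simp [blockSum]
  | succ m ih =>
    rw [Nat.add_right_comm, blockSum, ih, blockSum, add_assoc,
      show k + n + m = k + (m + n) by omega]

theorem blockSum_succ' (k n : ℕ) : blockSum B k (n + 1) = blockSum B (k + 1) n + B k := by
  rw [blockSum_add]
  simp [blockSum]

theorem blockSum_le_blockSum {k k' n n' : ℕ} (hk : k' ≤ k) (h : k + n = k' + n') :
    blockSum B k n ≤ blockSum B k' n' := by
  obtain ⟨d, rfl⟩ := exists_add_of_le hk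
  obtain rfl : n' = n + d := by omega
  rw [blockSum_add]
  exact le_self_add

end blockSum

namespace OmegaStarSum

variable {B : ℕ → Ordinal.{u}} {T : Ordinal.{u}}

def inBlock (k : ℕ) (b : (B k).ToType) : OmegaStarSum B T :=
  toLex (.inl (OrderDual.toDual (toLex ⟨k, OrderDual.toDual b⟩)))

def inTail (v : T.ToType) : OmegaStarSum B T :=
  toLex (.inr v)

theorem inBlock_or_inTail (w : OmegaStarSum B T) :
    (∃ k b, w = inBlock k b) ∨ ∃ v, w = inTail v := by
  obtain ⟨k, b⟩ | v := w
  exacts [.inl ⟨k, OrderDual.ofDual b, rfl⟩, .inr ⟨v, rfl⟩]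

theorem inBlock_lt_inBlock_iff {k : ℕ} {b b' : (B k).ToType} :
    (inBlock k b : OmegaStarSum B T) < inBlock k b' ↔ b < b' := by
  rw [inBlock, inBlock, Sum.Lex.inl_lt_inl_iff, OrderDual.toDual_lt_toDual, Sigma.Lex.lt_def]
  change k < k ∨ (∃ h : k = k, h ▸ OrderDual.toDual b' < OrderDual.toDual b) ↔ b < b'
  simp

theorem inBlock_lt_inBlock {k k' : ℕ} (h : k' < k) (b : (B k).ToType) (b' : (B k').ToType) :
    (inBlock k b : OmegaStarSum B T) < inBlock k' b' :=
  Sum.Lex.inl_lt_inl_iff.2 (OrderDual.toDual_lt_toDual.2 (Sigma.Lex.lt_def.2 (.inl h)))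

theorem le_of_inBlock_le_inBlock {k k' : ℕ} {b : (B k).ToType} {b' : (B k').ToType}
    (h : (inBlock k b : OmegaStarSum B T) ≤ inBlock k' b') : k' ≤ k :=
  not_lt.1 fun hk => (inBlock_lt_inBlock hk b' b).not_ge h

theorem inBlock_lt_inTail (k : ℕ) (b : (B k).ToType) (v : T.ToType) :
    (inBlock k b : OmegaStarSum B T) < inTail v :=
  Sum.Lex.inl_lt_inr _ _

theorem inTail_lt_inTail_iff {v v' : T.ToType} :
    (inTail v : OmegaStarSum B T) < inTail v' ↔ v < v' :=
  Sum.Lex.inr_lt_inr_iff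

def level (w : OmegaStarSum B T) : WithBot ℕ :=
  Sum.elim (fun a => ((ofLex (OrderDual.ofDual a)).1 : WithBot ℕ)) (fun _ => ⊥) (ofLex w)

@[simp] theorem level_inBlock (k : ℕ) (b : (B k).ToType) :
    level (inBlock k b : OmegaStarSum B T) = k := rfl

@[simp] theorem level_inTail (v : T.ToType) : level (inTail v : OmegaStarSum B T) = ⊥ := rfl

theorem isUpperSet_level_le (K : ℕ) : IsUpperSet {w : OmegaStarSum B T | level w ≤ K} := by
  intro w w' hww' hw
  rcases inBlock_or_inTail w with ⟨k, b, rfl⟩ | ⟨v, rfl⟩ <;>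
    rcases inBlock_or_inTail w' with ⟨k', b', rfl⟩ | ⟨v', rfl⟩
  · simp only [mem_ofPred_eq, level_inBlock, Nat.cast_le] at hw ⊢
    exact (le_of_inBlock_le_inBlock hww').trans hw
  · simp
  · exact absurd hww' (inBlock_lt_inTail _ _ _).not_ge
  · simp

/-- The ordinal coordinate identifying the elements of level at most `K` (blocks `K, …, 0` and the
tail) with the ordinal `blockSum B 0 (K + 1) + T`; it is meaningless on the other blocks. -/
noncomputable def pos (K : ℕ) (w : OmegaStarSum B T) : Ordinal.{u} :=
  Sum.elim
    (fun a => let s := ofLex (OrderDual.ofDual a)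
      blockSum B (s.1 + 1) (K - s.1) + (ToType.mk.symm (OrderDual.ofDual s.2) : Ordinal))
    (fun v => blockSum B 0 (K + 1) + (ToType.mk.symm v : Ordinal)) (ofLex w)

theorem pos_inBlock (K k : ℕ) (b : (B k).ToType) :
    pos K (inBlock k b : OmegaStarSum B T) =
      blockSum B (k + 1) (K - k) + (ToType.mk.symm b : Ordinal) := rfl

theorem pos_inTail (K : ℕ) (v : T.ToType) :
    pos K (inTail v : OmegaStarSum B T) =
      blockSum B 0 (K + 1) + (ToType.mk.symm v : Ordinal) := rfl

theorem pos_inBlock_lt (K k : ℕ) (b : (B k).ToType) :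
    pos K (inBlock k b : OmegaStarSum B T) < blockSum B k (K - k + 1) := by
  rw [pos_inBlock, blockSum_succ']
  exact add_lt_add_right (ToType.mk.symm b).2 _

theorem pos_inBlock_lt_blockSum {K k : ℕ} (hk : k ≤ K) (b : (B k).ToType) :
    pos K (inBlock k b : OmegaStarSum B T) < blockSum B 0 (K + 1) :=
  (pos_inBlock_lt K k b).trans_le (blockSum_le_blockSum B (Nat.zero_le k) (by omega))

theorem pos_succ {K : ℕ} {w : OmegaStarSum B T} (hw : level w ≤ K) :
    pos (K + 1) w = B (K + 1) + pos K w := by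
  rcases inBlock_or_inTail w with ⟨k, b, rfl⟩ | ⟨v, rfl⟩
  · have hk : k ≤ K := by simpa using hw
    rw [pos_inBlock, pos_inBlock, show K + 1 - k = K - k + 1 by omega, blockSum, add_assoc,
      show k + 1 + (K - k) = K + 1 by omega]
  · rw [pos_inTail, pos_inTail, blockSum, add_assoc, zero_add]

theorem strictMonoOn_pos (K : ℕ) : StrictMonoOn (pos K) {w : OmegaStarSum B T | level w ≤ K} := by
  intro w hw w' hw' hlt
  rcases inBlock_or_inTail w with ⟨k, b, rfl⟩ | ⟨v, rfl⟩ <;>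
    rcases inBlock_or_inTail w' with ⟨k', b', rfl⟩ | ⟨v', rfl⟩
  · have hk : k ≤ K := by simpa using hw
    rcases (le_of_inBlock_le_inBlock hlt.le).lt_or_eq with hk' | rfl
    · calc pos K (inBlock k b) < blockSum B k (K - k + 1) := pos_inBlock_lt K k b
        _ ≤ blockSum B (k' + 1) (K - k') := blockSum_le_blockSum B hk' (by omega)
        _ ≤ pos K (inBlock k' b') := le_self_add
    · exact add_lt_add_right (α := Ordinal)
        (ToType.mk.symm.strictMono (inBlock_lt_inBlock_iff.1 hlt)) _
  · exact (pos_inBlock_lt_blockSum (by simpa using hw) b).trans_le le_self_add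
  · exact absurd hlt (inBlock_lt_inTail _ _ _).not_gt
  · exact add_lt_add_right (α := Ordinal) (ToType.mk.symm.strictMono (inTail_lt_inTail_iff.1 hlt)) _

theorem pos_inBlock_mk (K k : ℕ) {o : Ordinal.{u}} (h : o < B k) :
    pos K (inBlock k (ToType.mk ⟨o, h⟩) : OmegaStarSum B T) = blockSum B (k + 1) (K - k) + o := by
  simp [pos_inBlock]

theorem image_pos (K : ℕ) :
    pos K '' {w : OmegaStarSum B T | level w ≤ K} = Iio (blockSum B 0 (K + 1) + T) := by
  refine Subset.antisymm ?_ ?_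
  · rintro _ ⟨w, hw, rfl⟩
    rcases inBlock_or_inTail w with ⟨k, b, rfl⟩ | ⟨v, rfl⟩
    · exact (pos_inBlock_lt_blockSum (by simpa using hw) b).trans_le le_self_add
    · exact add_lt_add_right (mem_Iio.1 (ToType.mk.symm v).2) _
  induction K with
  | zero =>
    intro o ho
    rcases lt_or_exists_eq_add_of_lt_add (show o < B 0 + T by simpa [blockSum] using ho) with
      h | ⟨t, ht, rfl⟩
    · exact ⟨inBlock 0 (ToType.mk ⟨o, h⟩), by simp, by rw [pos_inBlock_mk]; simp [blockSum]⟩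
    · exact ⟨inTail (ToType.mk ⟨t, ht⟩), by simp, by simp [pos_inTail, blockSum]⟩
  | succ K ih =>
    intro o ho
    rw [blockSum, zero_add, add_assoc] at ho
    rcases lt_or_exists_eq_add_of_lt_add ho with h | ⟨o', ho', rfl⟩
    · exact ⟨inBlock (K + 1) (ToType.mk ⟨o, h⟩), by simp, by rw [pos_inBlock_mk]; simp [blockSum]⟩
    · obtain ⟨w, hw, rfl⟩ := ih ho'
      exact ⟨w, hw.trans (WithBot.coe_le_coe.2 K.le_succ), pos_succ hw⟩

theorem nonempty_Ico_orderIso {K : ℕ} {z x : OmegaStarSum B T} (hz : level z ≤ K)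
    (hx : level x ≤ K) : Nonempty (Ico z x ≃o (pos K x - pos K z).ToType) :=
  haveI := (isUpperSet_level_le (B := B) (T := T) K).ordConnected
  (strictMonoOn_pos K).nonempty_Ico_orderIso (by rw [image_pos]; infer_instance) hz hx

theorem eq_pos_sub_pos {K : ℕ} {z x : OmegaStarSum B T} (hz : level z ≤ K) (hx : level x ≤ K)
    {o : Ordinal.{u}} (e : Ico z x ≃o o.ToType) : o = pos K x - pos K z :=
  let ⟨e'⟩ := nonempty_Ico_orderIso hz hx
  eq_of_toType_orderIso (e.symm.trans e')

end OmegaStarSum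

theorem Ordinal.add_omega0_opow_le_of_lt_mul {β e n : Ordinal.{u}} (h : β < ω ^ e * n) :
    β + ω ^ e ≤ ω ^ e * n := by
  have hne : ω ^ e ≠ 0 := opow_ne_zero e omega0_ne_zero
  calc β + ω ^ e = ω ^ e * (β / ω ^ e) + (β % ω ^ e + ω ^ e) := by
        rw [← add_assoc, div_add_mod]
    _ = ω ^ e * Order.succ (β / ω ^ e) := by
        rw [add_omega0_opow (mod_lt β hne), mul_succ]
    _ ≤ ω ^ e * n := mul_le_mul_right (Order.succ_le_of_lt ((lt_mul_iff_div_lt hne).1 h)) _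

theorem Ordinal.Ico_omega0_pow_mul_subset {a m n : ℕ} (h : m < n) :
    Ico (ω ^ a * (n : Ordinal.{u})) (ω ^ a * n + ω ^ a) ⊆
      Ico (ω ^ a * m + ω ^ a) (ω ^ (a + 1)) := by
  intro o ⟨hlo, hhi⟩
  refine ⟨le_trans ?_ hlo, hhi.trans_le ?_⟩
  · rw [← mul_add_one, ← Nat.cast_succ]
    exact mul_le_mul_right (by exact_mod_cast h) _
  · rw [← mul_add_one, ← Nat.cast_succ, pow_succ]
    exact mul_le_mul_right (natCast_lt_omega0 _).le _

def omegaMonomial (E C : ℕ → ℕ) (k : ℕ) : Ordinal.{u} :=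
  ω ^ E k * C k

namespace OmegaStarSum

variable {E C : ℕ → ℕ} {T : Ordinal.{u}}

theorem blockSum_lt_opow (hE : StrictMono E) (k n : ℕ) :
    blockSum (omegaMonomial.{u} E C) k n < ω ^ E (k + n) := by
  induction n with
  | zero => simpa [blockSum, ← opow_natCast] using opow_pos _ omega0_pos
  | succ n ih =>
    have hlt : ((E (k + n) : ℕ) : Ordinal.{u}) < E (k + (n + 1)) := by exact_mod_cast hE (by omega)
    rw [blockSum, omegaMonomial, ← opow_natCast, ← opow_natCast]
    rw [← opow_natCast] at ih
    exact isPrincipal_add_omega0_opow _ (opow_mul_lt_opow (natCast_lt_omega0 _) hlt)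
      (ih.trans ((opow_lt_opow_iff_right one_lt_omega0).2 hlt))

theorem exists_eventually_icoTypes_inter_Ico_nonempty (hC : ∀ k, C k ≠ 0) (hE : StrictMono E) :
    ∃ x : OmegaStarSum (omegaMonomial E C) T, ∀ᶠ J in atTop,
      (icoTypes x ∩ Ico (omegaMonomial E C J) (omegaMonomial E C J + ω ^ E J)).Nonempty := by
  have hpos : ∀ k, (0 : Ordinal.{u}) < omegaMonomial E C k := fun k =>
    pos_iff_ne_zero.2 (mul_ne_zero (pow_ne_zero _ omega0_ne_zero) (by exact_mod_cast hC k))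
  let start (k : ℕ) : OmegaStarSum (omegaMonomial E C) T :=
    inBlock k (ToType.mk ⟨0, hpos k⟩)
  refine ⟨start 0, eventually_atTop.2 ⟨1, fun J hJ =>
    ⟨blockSum (omegaMonomial E C) 1 J, ⟨start J, ?_, ?_⟩, ?_⟩⟩⟩
  · exact (inBlock_lt_inBlock (by omega) _ _).le
  · have h := nonempty_Ico_orderIso (K := J) (z := start J) (x := start 0) (by simp [start])
      (by simp [start])
    rwa [pos_inBlock_mk, pos_inBlock_mk, Nat.sub_self, Nat.sub_zero, blockSum, add_zero,
      add_zero, Ordinal.sub_zero] at h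
  · obtain ⟨n, rfl⟩ := Nat.exists_eq_add_of_le' hJ
    have hlt := blockSum_lt_opow (C := C) hE 1 n
    rw [add_comm 1 n] at hlt
    rw [blockSum, add_comm 1 n]
    exact ⟨le_self_add, add_lt_add_right hlt _⟩

theorem eventually_pos_lt (hE : StrictMono E) (hT : T ≤ ω ^ ω)
    (x : OmegaStarSum (omegaMonomial E C) T) :
    ∀ᶠ J : ℕ in atTop, level x ≤ J ∧ pos J x < omegaMonomial E C J + ω ^ E J := by
  rcases inBlock_or_inTail x with ⟨k, b, rfl⟩ | ⟨v, rfl⟩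
  · filter_upwards [eventually_ge_atTop k] with J hkJ
    refine ⟨by rw [level_inBlock]; exact_mod_cast hkJ, (pos_inBlock_lt J k b).trans ?_⟩
    obtain ⟨n, rfl⟩ := Nat.exists_eq_add_of_le hkJ
    rw [Nat.add_sub_cancel_left, blockSum]
    exact add_lt_add_right (blockSum_lt_opow hE k n) _
  · obtain ⟨N, hN⟩ : ∃ N : ℕ, (ToType.mk.symm v : Ordinal.{u}) < ω ^ N := by
      obtain ⟨a, ha, hva⟩ := (lt_opow_of_isSuccLimit omega0_ne_zero isSuccLimit_omega0).1
        ((mem_Iio.1 (ToType.mk.symm v).2).trans_le hT)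
      obtain ⟨N, rfl⟩ := lt_omega0.1 ha
      exact ⟨N, by rwa [opow_natCast] at hva⟩
    filter_upwards [eventually_ge_atTop N] with J hNJ
    refine ⟨by simp, ?_⟩
    rw [pos_inTail, blockSum, zero_add, add_assoc]
    have hsum : blockSum (omegaMonomial E C) 0 J < ω ^ E J := by
      simpa using blockSum_lt_opow (C := C) hE 0 J
    have hv : (ToType.mk.symm v : Ordinal.{u}) < ω ^ E J := by
      refine hN.trans_le ?_
      rw [← opow_natCast, ← opow_natCast]
      exact opow_le_opow_right omega0_pos (by exact_mod_cast hNJ.trans (hE.id_le J))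
    rw [← opow_natCast] at hsum hv ⊢
    exact add_lt_add_right (isPrincipal_add_omega0_opow _ hsum hv) _

theorem eventually_disjoint_icoTypes_Ico (hE : StrictMono E) (hT : T ≤ ω ^ ω)
    (x : OmegaStarSum (omegaMonomial E C) T) :
    ∀ᶠ J in atTop,
      Disjoint (icoTypes x) (Ico (omegaMonomial E C J + ω ^ E J) (ω ^ (E J + 1))) := by
  filter_upwards [eventually_pos_lt hE hT x] with J ⟨hxJ, hxpos⟩
  refine disjoint_left.2 ?_
  rintro o ⟨z, -, ⟨g⟩⟩ ⟨hlo, hhi⟩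
  rcases le_or_gt (level z) J with hzJ | hzJ
  · rw [eq_pos_sub_pos hzJ hxJ g] at hlo
    exact (hlo.trans_lt ((sub_le_self _ _).trans_lt hxpos)).false
  rcases inBlock_or_inTail z with ⟨k, b, rfl⟩ | ⟨v, rfl⟩
  swap
  · simp at hzJ
  have hJk : J < k := by rw [level_inBlock] at hzJ; exact_mod_cast hzJ
  obtain ⟨K, rfl⟩ : ∃ K, k = K + 1 := ⟨k - 1, by omega⟩
  have hxK : level x ≤ K := hxJ.trans (by exact_mod_cast Nat.le_of_lt_succ hJk)
  rw [eq_pos_sub_pos (K := K + 1) (by simp) (hxK.trans (by exact_mod_cast K.le_succ)) g,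
    pos_succ hxK, pos_inBlock, Nat.sub_self, blockSum, zero_add] at hhi
  have hb : (ToType.mk.symm b : Ordinal.{u}) < ω ^ (E (K + 1) : Ordinal) * C (K + 1) := by
    rw [opow_natCast]; exact (ToType.mk.symm b).2
  have hgap : ω ^ (E (K + 1) : Ordinal) ≤
      omegaMonomial E C (K + 1) + pos K x - ↑(ToType.mk.symm b) :=
    le_sub_of_add_le <|
      (add_omega0_opow_le_of_lt_mul hb).trans (by rw [opow_natCast]; exact le_self_add)
  refine (hhi.trans_le' (hgap.trans' ?_)).false
  rw [← opow_natCast]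
  exact opow_le_opow_right omega0_pos (by exact_mod_cast hE hJk)

end OmegaStarSum

theorem strictMono_e (i : ℤ) : StrictMono (e i) :=
  strictMono_nat_of_lt_succ fun k => by unfold e; omega

theorem c_ne_zero (i : ℤ) (k : ℕ) : c i k ≠ 0 := by
  unfold c; omega

theorem exists_e_add_eq_and_c_lt {i j : ℤ} (hij : i < j) :
    ∃ d, ∀ J, e i (J + d) = e j J ∧ c j J < c i (J + d) :=
  ⟨(max j 0 - max i 0).toNat, fun J => by unfold e c; omega⟩

/-- The orders `L i` are pairwise non-isomorphic. -/
theorem L_pairwise_not_orderIso : ∀ i j : ℤ, i ≠ j → IsEmpty (L i ≃o L j) := by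
  suffices h : ∀ i j : ℤ, i < j → L i ≃o L j → False from fun i j hij =>
    ⟨fun f => hij.lt_or_gt.elim (h i j · f) (h j i · f.symm)⟩
  intro i j hij f
  obtain ⟨d, hd⟩ := exists_e_add_eq_and_c_lt hij
  obtain ⟨x, hx⟩ :=
    OmegaStarSum.exists_eventually_icoTypes_inter_Ico_nonempty (T := ω ^ ω) (c_ne_zero i)
      (strictMono_e i)
  obtain ⟨J, ⟨o, hox, ho⟩, hdisj⟩ := (((tendsto_add_atTop_nat d).eventually hx).and
    (OmegaStarSum.eventually_disjoint_icoTypes_Ico (C := c j) (strictMono_e j) le_rfl (f x))).exists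
  obtain ⟨he, hc⟩ := hd J
  simp only [omegaMonomial, he] at ho hdisj
  exact disjoint_left.1 (hdisj.mono_left (f.icoTypes_subset x)) hox
    (Ico_omega0_pow_mul_subset hc ho)
end

section
/- For every integer i, there is an order isomorphism L_i ×ₗ ℕ ≅ L_{i+1}, where ℕ carries its usual order; that is, replacing every point of L_i by a copy of ω yields L_{i+1}. -/
open Ordinal

/-!
Multiplying on the right by `ω` distributes over both lexicographic sums defining `L i`, so
`L i ×ₗ ℕ` is the `ω*`-sum of the ordinals `ω · ω^e · c = ω^(e+1) · c`, followed by
`ω · ω^ω = ω^ω`. For `i ≥ 0` these are exactly the summands of `L (i+1)`. For `i < 0` they are the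
summands of `L (i+1)` shifted by one place, and the rightmost summand `ω · c` of `L (i+1)`, which
is missing, is absorbed by the final `ω^ω` since `ω · c + ω^ω = ω^ω`.
-/

open OrderDual

namespace OrderIso

variable {ι : Type*}

def sigmaLexCongrRight {X Y : ι → Type*} [LT ι] [∀ i, LE (X i)] [∀ i, LE (Y i)]
    (f : ∀ i, X i ≃o Y i) : (Σₗ i, X i) ≃o Σₗ i, Y i where
  toEquiv := ofLex.trans ((Equiv.sigmaCongrRight fun i => (f i).toEquiv).trans toLex)
  map_rel_iff' := by
    rintro ⟨i, a⟩ ⟨j, b⟩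
    constructor <;> rintro (⟨_, _, h⟩ | ⟨_, _, h⟩)
    exacts [Sigma.Lex.left _ _ h, Sigma.Lex.right _ _ ((f i).le_iff_le.1 h),
      Sigma.Lex.left _ _ h, Sigma.Lex.right _ _ ((f i).le_iff_le.2 h)]

def sigmaLexProdLexDistrib (X : ι → Type*) (C : Type*) [LT ι] [∀ i, LT (X i)] [LE C] :
    (Σₗ i, X i) ×ₗ C ≃o Σₗ i, X i ×ₗ C where
  toFun p := toLex ⟨(ofLex (ofLex p).1).1, toLex ((ofLex (ofLex p).1).2, (ofLex p).2)⟩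
  invFun q := toLex (toLex ⟨(ofLex q).1, (ofLex (ofLex q).2).1⟩, (ofLex (ofLex q).2).2)
  left_inv _ := rfl
  right_inv _ := rfl
  map_rel_iff' := by
    rintro ⟨⟨i, a⟩, x⟩ ⟨⟨j, b⟩, y⟩
    constructor
    · rintro (⟨_, _, hij⟩ | ⟨_, _, hab⟩)
      · exact Prod.Lex.toLex_le_toLex.2 (Or.inl (Sigma.Lex.left _ _ hij))
      · rcases Prod.Lex.toLex_le_toLex.1 hab with hab | ⟨rfl, hxy⟩
        · exact Prod.Lex.toLex_le_toLex.2 (Or.inl (Sigma.Lex.right _ _ hab))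
        · exact Prod.Lex.toLex_le_toLex.2 (Or.inr ⟨rfl, hxy⟩)
    · intro h
      rcases Prod.Lex.toLex_le_toLex.1 h with (⟨_, _, hij⟩ | ⟨_, _, hab⟩) | ⟨heq, hxy⟩
      · exact Sigma.Lex.left _ _ hij
      · exact Sigma.Lex.right _ _ (Prod.Lex.toLex_le_toLex.2 (Or.inl hab))
      · cases heq
        exact Sigma.Lex.right _ _ (Prod.Lex.toLex_le_toLex.2 (Or.inr ⟨rfl, hxy⟩))

def dualSigmaLex (X : ι → Type*) [LT ι] [∀ i, LE (X i)] :
    (Σₗ i, (X i)ᵒᵈ)ᵒᵈ ≃o Σₗ i : ιᵒᵈ, X (ofDual i) where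
  toEquiv := ofDual.trans (ofLex.trans toLex)
  map_rel_iff' := Sigma.lex_swap

def dualSigmaLexProdLexCongr {X Y : ι → Type*} {C : Type*} [Preorder ι] [∀ i, Preorder (X i)]
    [∀ i, Preorder (Y i)] [Preorder C] (f : ∀ i, X i ×ₗ C ≃o Y i) :
    (Σₗ i, (X i)ᵒᵈ)ᵒᵈ ×ₗ C ≃o (Σₗ i, (Y i)ᵒᵈ)ᵒᵈ :=
  (Prod.Lex.prodLexCongr (dualSigmaLex X) (refl C)).trans <|
    (sigmaLexProdLexDistrib _ C).trans <|
      (sigmaLexCongrRight fun i => f (ofDual i)).trans (dualSigmaLex Y).symm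

def sigmaLexNat (X : ℕ → Type*) [∀ n, LE (X n)] :
    (Σₗ n, X n) ≃o X 0 ⊕ₗ Σₗ n, X (n + 1) where
  toEquiv := ofLex.trans <| (Equiv.sigmaNatSucc X).trans <|
    (Equiv.sumCongr (.refl _) toLex).trans toLex
  map_rel_iff' := by
    simp_rw [Lex.forall]
    rintro ⟨_ | m, a⟩ ⟨_ | n, b⟩
    · refine Sum.Lex.inl_le_inl_iff.trans ⟨fun h => Sigma.Lex.right _ _ h, ?_⟩
      rintro (⟨_, _, h⟩ | ⟨_, _, h⟩)
      exacts [(lt_irrefl _ h).elim, h]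
    · exact iff_of_true (Sum.Lex.inl_le_inr _ _) (Sigma.Lex.left _ _ n.succ_pos)
    · refine iff_of_false Sum.Lex.not_inr_le_inl ?_
      rintro ⟨_, _, h⟩
      exact Nat.not_lt_zero _ h
    · refine Sum.Lex.inr_le_inr_iff.trans ⟨?_, ?_⟩ <;> rintro (⟨_, _, h⟩ | ⟨_, _, h⟩)
      exacts [Sigma.Lex.left _ _ (Nat.succ_lt_succ h), Sigma.Lex.right _ _ h,
        Sigma.Lex.left _ _ (Nat.lt_of_succ_lt_succ h), Sigma.Lex.right _ _ h]

def dualSigmaLexNatSumLexOfAbsorb (X : ℕ → Type*) {W : Type*} [∀ n, LE (X n)] [LE W]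
    (h : X 0 ⊕ₗ W ≃o W) : (Σₗ n, (X n)ᵒᵈ)ᵒᵈ ⊕ₗ W ≃o (Σₗ n, (X (n + 1))ᵒᵈ)ᵒᵈ ⊕ₗ W :=
  (sumLexCongr ((sigmaLexNat _).dual.trans (sumLexDualAntidistrib _ _)) (refl W)).trans <|
    (sumLexAssoc _ _ _).trans <|
      sumLexCongr (refl _) ((sumLexCongr (dualDual _).symm (refl W)).trans h)

end OrderIso

instance Sum.Lex.wellFoundedLT {α β : Type*} [LT α] [LT β] [WellFoundedLT α]
    [WellFoundedLT β] : WellFoundedLT (α ⊕ₗ β) :=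
  ⟨Sum.lex_wf wellFounded_lt wellFounded_lt⟩

namespace Ordinal

universe u

theorem typeLT_prodLex {α β : Type u} [LinearOrder α] [WellFoundedLT α] [LinearOrder β]
    [WellFoundedLT β] : typeLT (α ×ₗ β) = (typeLT β) * (typeLT α) :=
  type_prod_lex _ _

theorem typeLT_sumLex {α β : Type u} [LinearOrder α] [WellFoundedLT α] [LinearOrder β]
    [WellFoundedLT β] : typeLT (α ⊕ₗ β) = (typeLT α) + (typeLT β) :=
  type_sum_lex _ _

noncomputable def orderIsoToTypeOfTypeLTEq {α : Type u} [LinearOrder α] [WellFoundedLT α]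
    {o : Ordinal.{u}} (h : typeLT α = o) : α ≃o o.ToType :=
  .ofRelIsoLT (Classical.choice (type_eq.1 (h.trans (type_toType o).symm)))

noncomputable def toTypeProdLexNat {a b : Ordinal.{0}} (h : ω * a = b) :
    a.ToType ×ₗ ℕ ≃o b.ToType :=
  orderIsoToTypeOfTypeLTEq (by rw [typeLT_prodLex, type_toType, type_nat_lt, h])

noncomputable def toTypeSumLex {a b c : Ordinal.{u}} (h : a + b = c) :
    a.ToType ⊕ₗ b.ToType ≃o c.ToType :=
  orderIsoToTypeOfTypeLTEq (by rw [typeLT_sumLex, type_toType, type_toType, h])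

theorem omega0_mul_opow_omega0 : ω * ω ^ ω = ω ^ ω := by
  rw [← opow_one_add, one_add_omega0]

end Ordinal

namespace L

abbrev summand (i : ℤ) (j : ℕ) : Ordinal.{0} := ω ^ e i j * c i j

theorem omega0_mul_summand_of_nonneg {i : ℤ} (hi : 0 ≤ i) (j : ℕ) :
    ω * summand i j = summand (i + 1) j := by
  have he : e (i + 1) j = e i j + 1 := by simp only [e]; omega
  have hc : c (i + 1) j = c i j := by simp only [c]; omega
  rw [summand, summand, he, hc, pow_succ', mul_assoc]

theorem omega0_mul_summand_of_neg {i : ℤ} (hi : i < 0) (j : ℕ) :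
    ω * summand i j = summand (i + 1) (j + 1) := by
  have he : e (i + 1) (j + 1) = e i j + 1 := by simp only [e]; omega
  have hc : c (i + 1) (j + 1) = c i j := by simp only [c]; omega
  rw [summand, summand, he, hc, pow_succ', mul_assoc]

theorem summand_add_omega0_opow_omega0 (i : ℤ) (j : ℕ) : summand i j + ω ^ ω = ω ^ ω := by
  rw [summand, ← opow_natCast]
  exact add_omega0_opow (opow_mul_lt_opow (natCast_lt_omega0 _) (natCast_lt_omega0 _))

noncomputable def prodLexNatOrderIso (i : ℤ) (s : ℕ → ℕ)
    (hs : ∀ j, ω * summand i j = summand (i + 1) (s j)) :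
    L i ×ₗ ℕ ≃o (Σₗ j, ((summand (i + 1) (s j)).ToType)ᵒᵈ)ᵒᵈ ⊕ₗ (ω ^ ω).ToType :=
  (Prod.Lex.sumLexProdLexDistrib _ _ _).trans <| OrderIso.sumLexCongr
    (OrderIso.dualSigmaLexProdLexCongr fun j => toTypeProdLexNat (hs j))
    (toTypeProdLexNat omega0_mul_opow_omega0)

end L

/-- Replacing every point of `L i` by a copy of `ω` yields `L (i+1)`:
`L i ×ₗ ℕ ≅ L (i+1)`. -/
theorem L_mul_omega : ∀ i : ℤ, Nonempty (Lex (L i × ℕ) ≃o L (i + 1)) := by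
  intro i
  rcases le_or_gt 0 i with hi | hi
  · exact ⟨L.prodLexNatOrderIso i id (L.omega0_mul_summand_of_nonneg hi)⟩
  · exact ⟨(L.prodLexNatOrderIso i (· + 1) (L.omega0_mul_summand_of_neg hi)).trans
      (OrderIso.dualSigmaLexNatSumLexOfAbsorb (fun j => (L.summand (i + 1) j).ToType)
        (toTypeSumLex (L.summand_add_omega0_opow_omega0 (i + 1) 0))).symm⟩
end

section
/- Any two ladders in a linear order eventually coalesce: if (C_k, t) and (D_l, s) are ladders in a linear order L, then there exist k₀, l₀ ∈ ℕ such that for all n ∈ ℕ, C_{k₀+n} = D_{l₀+n}. In particular, the spectra t and s are tail-equivalent sequences of natural numbers. -/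
open Ordinal

variable {L : Type*} [LinearOrder L]

/-- A cut, identified with its initial segment (a lower set) `C`, has type `n`
if `C` has a nonempty final segment order-isomorphic to the ordinal `ω^n`. -/
def CutHasType (C : Set L) (n : ℕ) : Prop :=
  ∃ S : Set L, S.Nonempty ∧ S ⊆ C ∧ (∀ x ∈ C, ∀ y ∈ S, y ≤ x → x ∈ S) ∧
    Nonempty (S ≃o Ordinal.ToType (ω ^ n : Ordinal.{0}))

/-- A ladder in `L`: a strictly decreasing, coinitial sequence of cuts
`C : ℕ → Set L` with spectrum `t : ℕ → ℕ`, such that `C k` has type `t k`,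
the types are non-decreasing as `k` grows, and each `C (k+1)` is the rightmost
cut to the left of `C k` whose type is at least as large as the type of `C k`. -/
def IsLadder (C : ℕ → Set L) (t : ℕ → ℕ) : Prop :=
  (∀ k, IsLowerSet (C k)) ∧
  (∀ k, C (k + 1) ⊂ C k) ∧
  (∀ x : L, ∃ k, x ∉ C k) ∧
  (∀ k, CutHasType (C k) (t k)) ∧
  (∀ k, t k ≤ t (k + 1)) ∧
  (∀ k, ∀ D : Set L, IsLowerSet D → C (k + 1) ⊂ D → D ⊂ C k →
    ∀ m : ℕ, CutHasType D m → m < t k)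

/-!
A nonempty final segment of `ω ^ n` is again of type `ω ^ n`, because `ω ^ n` is additively
principal; hence two nested final segments of a cut have the same exponent and the type of a cut
is well defined.

By (v) and the monotonicity of the spectra, a cut of one ladder cannot lie strictly inside a step
of the other ladder whose upper end has smaller or equal type. So if `C k` lies in the step
`(D (l + 1), D l]`, the last cut of `C` above `D (l + 1)` has type at most `s l ≤ s (l + 1)`, and
the next cut of `C` must be `D (l + 1)` itself: the ladders meet. Once `C k = D l`, the same
comparison of types forces `C (k + 1) = D (l + 1)`.
-/

namespace Ordinal

theorem typeLT_Ici_eq_of_isPrincipal {α : Type*} [LinearOrder α] [WellFoundedLT α]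
    (hα : IsPrincipal (· + ·) (typeLT α)) (x : α) : typeLT (Set.Ici x) = typeLT α := by
  have hsplit : typeLT (Set.Iio x) + typeLT (Set.Ici x) = typeLT α :=
    RelIso.ordinalType_congr (r := Sum.Lex (· < ·) (· < ·)) (OrderIso.sumLexIioIci x).toRelIsoLT
  refine (type_set_le _).antisymm (not_lt.1 fun hlt => ?_)
  exact isPrincipal_add_iff_add_lt_ne_self.1 hα _ (typein_lt_type _ x) _ hlt hsplit

theorem typeLT_eq_of_isUpperSet_of_isPrincipal {α : Type*} [LinearOrder α] [WellFoundedLT α]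
    (hα : IsPrincipal (· + ·) (typeLT α)) {U : Set α} (hU : IsUpperSet U) (hne : U.Nonempty) :
    typeLT U = typeLT α := by
  obtain rfl | ⟨x, rfl⟩ := hU.eq_empty_or_Ici
  · exact absurd hne Set.not_nonempty_empty
  · exact typeLT_Ici_eq_of_isPrincipal hα x

theorem isPrincipal_add_omega0_pow (n : ℕ) : IsPrincipal (· + ·) (ω ^ n) := by
  simpa only [opow_natCast] using isPrincipal_add_omega0_opow n

theorem omega0_pow_injective : Function.Injective fun n : ℕ => (ω ^ n : Ordinal) := by
  intro m n h
  simpa only [← opow_natCast, opow_right_inj one_lt_omega0, Nat.cast_inj] using h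

end Ordinal

open Ordinal in
theorem exponent_eq_of_finalSegment {S S' : Set L} {m n : ℕ} (hS'S : S' ⊆ S)
    (hne : S'.Nonempty) (hfin : ∀ x ∈ S, ∀ y ∈ S', y ≤ x → x ∈ S')
    (e : S ≃o ToType (ω ^ m : Ordinal.{0})) (e' : S' ≃o ToType (ω ^ n : Ordinal.{0})) :
    n = m := by
  let f : ToType (ω ^ n : Ordinal.{0}) → ToType (ω ^ m : Ordinal.{0}) :=
    fun z => e ⟨e'.symm z, hS'S (e'.symm z).2⟩
  have hf : StrictMono f := fun z w hzw => e.strictMono (e'.symm.strictMono hzw)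
  have hup : IsUpperSet (Set.range f) := by
    rintro _ w hzw ⟨z, rfl⟩
    have hw : (e.symm w : L) ∈ S' :=
      hfin _ (e.symm w).2 _ (e'.symm z).2 <| by
        simpa [f] using Subtype.coe_le_coe.2 (e.symm.monotone hzw)
    exact ⟨e' ⟨_, hw⟩, by simp [f]⟩
  have hn : typeLT (Set.range f) = ω ^ n :=
    (hf.orderIso f).ordinalType_congr.symm.trans (type_toType _)
  have hm := typeLT_eq_of_isUpperSet_of_isPrincipal
    (by rw [type_toType]; exact isPrincipal_add_omega0_pow m) hup
    ⟨_, Set.mem_range_self (e' ⟨_, hne.some_mem⟩)⟩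
  exact omega0_pow_injective (hn.symm.trans (hm.trans (type_toType _)))

theorem finalSegment_total {E S S' : Set L} (hS : ∀ x ∈ E, ∀ y ∈ S, y ≤ x → x ∈ S)
    (hS' : ∀ x ∈ E, ∀ y ∈ S', y ≤ x → x ∈ S') (hSE : S ⊆ E) (hS'E : S' ⊆ E) :
    S ⊆ S' ∨ S' ⊆ S := by
  refine or_iff_not_imp_left.2 fun h y hy => ?_
  obtain ⟨x, hxS, hxS'⟩ := Set.not_subset.1 h
  rcases le_total x y with hxy | hyx
  · exact hS y (hS'E hy) x hxS hxy
  · exact absurd (hS' x (hSE hxS) y hy hyx) hxS'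

theorem CutHasType.nonempty {E : Set L} {n : ℕ} (h : CutHasType E n) : E.Nonempty := by
  obtain ⟨S, hne, hSE, -⟩ := h
  exact hne.mono hSE

theorem CutHasType.unique {E : Set L} {m n : ℕ} (hm : CutHasType E m) (hn : CutHasType E n) :
    m = n := by
  obtain ⟨S, hSne, hSE, hSfin, ⟨e⟩⟩ := hm
  obtain ⟨S', hS'ne, hS'E, hS'fin, ⟨e'⟩⟩ := hn
  rcases finalSegment_total hSfin hS'fin hSE hS'E with h | h
  · exact exponent_eq_of_finalSegment h hSne (fun x hx => hSfin x (hS'E hx)) e' e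
  · exact (exponent_eq_of_finalSegment h hS'ne (fun x hx => hS'fin x (hSE hx)) e e').symm

namespace IsLadder

variable {C D : ℕ → Set L} {t s : ℕ → ℕ} {E X : Set L} {k l m : ℕ}

theorem isLowerSet (hC : IsLadder C t) (k : ℕ) : IsLowerSet (C k) := hC.1 k

theorem succ_ssubset (hC : IsLadder C t) (k : ℕ) : C (k + 1) ⊂ C k := hC.2.1 k

theorem exists_notMem (hC : IsLadder C t) (x : L) : ∃ k, x ∉ C k := hC.2.2.1 x

theorem cutHasType (hC : IsLadder C t) (k : ℕ) : CutHasType (C k) (t k) := hC.2.2.2.1 k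

theorem spectrum_le_succ (hC : IsLadder C t) (k : ℕ) : t k ≤ t (k + 1) := hC.2.2.2.2.1 k

theorem type_lt (hC : IsLadder C t) (hE : IsLowerSet E) (h₁ : C (k + 1) ⊂ E) (h₂ : E ⊂ C k)
    (hm : CutHasType E m) : m < t k :=
  hC.2.2.2.2.2 k E hE h₁ h₂ m hm

theorem type_le (hC : IsLadder C t) (hE : IsLowerSet E) (h₁ : C (k + 1) ⊂ E) (h₂ : E ⊆ C k)
    (hm : CutHasType E m) : m ≤ t k := by
  rcases h₂.ssubset_or_eq with h₂ | rfl
  · exact (hC.type_lt hE h₁ h₂ hm).le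
  · exact (hm.unique (hC.cutHasType k)).le

theorem antitone (hC : IsLadder C t) : Antitone C :=
  antitone_nat_of_succ_le fun k => (hC.succ_ssubset k).subset

theorem exists_subset (hC : IsLadder C t) (hX : IsLowerSet X) (hne : X.Nonempty) :
    ∃ k, C k ⊆ X := by
  obtain ⟨x, hx⟩ := hne
  obtain ⟨k, hk⟩ := hC.exists_notMem x
  exact ⟨k, ((hC.isLowerSet k).total hX).resolve_right fun h => hk (h hx)⟩

theorem exists_step (hC : IsLadder C t) (hX : IsLowerSet X) (hne : X.Nonempty)
    (hXk : X ⊂ C k) : ∃ j, k ≤ j ∧ C (j + 1) ⊆ X ∧ X ⊂ C j := by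
  classical
  have hex : ∃ i, C i ⊆ X := hC.exists_subset hX hne
  have hk : k < Nat.find hex := by
    refine (Nat.lt_find_iff hex k).2 fun i hi hiX => hXk.not_subset ?_
    exact (hC.antitone hi).trans hiX
  obtain ⟨j, hj⟩ : ∃ j, Nat.find hex = j + 1 := Nat.exists_eq_add_one_of_ne_zero (by omega)
  have hjX : ¬ C j ⊆ X := Nat.find_min hex (by omega)
  refine ⟨j, by omega, hj ▸ Nat.find_spec hex, ?_⟩
  exact ((hX.total (hC.isLowerSet j)).resolve_right hjX).ssubset_of_not_subset hjX

theorem exists_eq_succ (hC : IsLadder C t) (hD : IsLadder D s) (h₁ : D (l + 1) ⊂ C k)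
    (h₂ : C k ⊆ D l) : ∃ j, C (j + 1) = D (l + 1) := by
  obtain ⟨j, hkj, hj₁, hj₂⟩ := hC.exists_step (hD.isLowerSet _) (hD.cutHasType _).nonempty h₁
  refine ⟨j, hj₁.eq_of_not_ssubset fun hlt => ?_⟩
  have hlt' : s (l + 1) < t j := hC.type_lt (hD.isLowerSet _) hlt hj₂ (hD.cutHasType _)
  have hle : t j ≤ s l :=
    hD.type_le (hC.isLowerSet j) hj₂ ((hC.antitone hkj).trans h₂) (hC.cutHasType j)
  exact absurd (hD.spectrum_le_succ l) (by omega)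

theorem exists_eq (hC : IsLadder C t) (hD : IsLadder D s) : ∃ k l, C k = D l := by
  obtain ⟨k, hk⟩ := hC.exists_subset (hD.isLowerSet 1) (hD.cutHasType 1).nonempty
  have hk₀ : C k ⊂ D 0 := hk.trans_ssubset (hD.succ_ssubset 0)
  obtain ⟨l, -, hl₁, hl₂⟩ := hD.exists_step (hC.isLowerSet k) (hC.cutHasType k).nonempty hk₀
  rcases hl₁.ssubset_or_eq with hlt | heq
  · obtain ⟨j, hj⟩ := hC.exists_eq_succ hD hlt hl₂.subset
    exact ⟨j + 1, l + 1, hj⟩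
  · exact ⟨k, l + 1, heq.symm⟩

theorem spectrum_eq_of_eq (hC : IsLadder C t) (hD : IsLadder D s) (h : C k = D l) : t k = s l :=
  (hC.cutHasType k).unique (h ▸ hD.cutHasType l)

theorem succ_subset_of_eq (hC : IsLadder C t) (hD : IsLadder D s) (h : C k = D l) :
    D (l + 1) ⊆ C (k + 1) := by
  by_contra hns
  have hlt : C (k + 1) ⊂ D (l + 1) :=
    (((hD.isLowerSet _).total (hC.isLowerSet _)).resolve_left hns).ssubset_of_not_subset hns
  have hlt' : s (l + 1) < t k :=
    hC.type_lt (hD.isLowerSet _) hlt (h ▸ hD.succ_ssubset l) (hD.cutHasType _)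
  have heq : t k = s l := hC.spectrum_eq_of_eq hD h
  exact absurd (hD.spectrum_le_succ l) (by omega)

theorem add_eq_of_eq (hC : IsLadder C t) (hD : IsLadder D s) (h : C k = D l) (n : ℕ) :
    C (k + n) = D (l + n) := by
  induction n with
  | zero => exact h
  | succ n ih => exact (hD.succ_subset_of_eq hC ih.symm).antisymm (hC.succ_subset_of_eq hD ih)

end IsLadder

/-- Any two ladders in a linear order eventually coalesce; in particular their
spectra are tail-equivalent. -/
theorem ladders_coalesce (C D : ℕ → Set L) (t s : ℕ → ℕ)
    (hC : IsLadder C t) (hD : IsLadder D s) :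
    ∃ k₀ l₀ : ℕ, ∀ n : ℕ, C (k₀ + n) = D (l₀ + n) ∧ t (k₀ + n) = s (l₀ + n) := by
  obtain ⟨k, l, h⟩ := hC.exists_eq hD
  refine ⟨k, l, fun n => ?_⟩
  have hn := hC.add_eq_of_eq hD h n
  exact ⟨hn, hC.spectrum_eq_of_eq hD hn⟩
end

section
/- Let B be a densely ordered linear order, and let (M b) and (N b) for b : B be two families of nonempty scattered linear orders. Then every order isomorphism f : Σₗ (b : B), M b ≅ Σₗ (b : B), N b maps fibers onto fibers: for every b : B there exists c : B such that f maps the fiber {b} × M b bijectively onto the fiber {c} × N c. -/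
/-!
Suppose `f` sent two points `(b, x) < (b, x')` of one fiber into fibers `c < c'`. Since `B` is
dense, the open interval `(c, c')` of `B` contains a copy of `ℚ`, and choosing one point of `N d`
over each of its elements gives a copy of `ℚ` strictly between `f (b, x)` and `f (b, x')`.
Its preimage under `f` lies strictly between `(b, x)` and `(b, x')`, hence inside the fiber
over `b`, contradicting the scatteredness of `M b`. So `f` maps each fiber into a single fiber,
and so does `f.symm`, which forces the image to be the whole fiber.
-/

namespace Sigma.Lex

variable {ι : Type*} {α : ι → Type*}

theorem exists_eq_toLex_mk {p : Σₗ i, α i} {i : ι} (h : (ofLex p).1 = i) :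
    ∃ a, p = toLex ⟨i, a⟩ := by
  rcases p with ⟨j, a⟩
  subst h
  exact ⟨a, rfl⟩

theorem toLex_mk_lt_toLex_mk_iff [Preorder ι] [∀ i, Preorder (α i)] {i : ι} {a b : α i} :
    (toLex ⟨i, a⟩ : Σₗ i, α i) < toLex ⟨i, b⟩ ↔ a < b := by
  refine ⟨fun h ↦ ?_, fun h ↦ Sigma.Lex.right _ _ h⟩
  rcases Sigma.Lex.lt_def.1 h with hi | ⟨_, hab⟩
  · exact absurd hi (lt_irrefl i)
  · exact hab

theorem fst_eq_of_toLex_mk_lt_of_lt_toLex_mk [Preorder ι] [∀ i, Preorder (α i)]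
    {p : Σₗ i, α i} {i : ι} {a b : α i} (ha : toLex ⟨i, a⟩ < p) (hb : p < toLex ⟨i, b⟩) :
    (ofLex p).1 = i := by
  rcases Sigma.Lex.lt_def.1 ha with ha | ⟨ha, -⟩
  · rcases Sigma.Lex.lt_def.1 hb with hb | ⟨hb, -⟩
    · exact absurd (ha.trans hb) (lt_irrefl i)
    · exact hb
  · exact ha.symm

theorem nonempty_embedding_fiber_of_forall_mem_Ioo [Preorder ι] [∀ i, Preorder (α i)]
    {β : Type*} [LinearOrder β] (g : β ↪o Σₗ i, α i) {i : ι} {a b : α i}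
    (hg : ∀ y, g y ∈ Set.Ioo (toLex ⟨i, a⟩) (toLex ⟨i, b⟩)) : Nonempty (β ↪o α i) := by
  choose h hh using fun y ↦ exists_eq_toLex_mk
    (fst_eq_of_toLex_mk_lt_of_lt_toLex_mk (hg y).1 (hg y).2)
  refine ⟨OrderEmbedding.ofStrictMono h fun y z hyz ↦ ?_⟩
  rw [← toLex_mk_lt_toLex_mk_iff, ← hh, ← hh]
  exact g.strictMono hyz

theorem exists_rat_embedding_forall_mem_Ioo [LinearOrder ι] [DenselyOrdered ι]
    [∀ i, Preorder (α i)] [∀ i, Nonempty (α i)] {p q : Σₗ i, α i}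
    (h : (ofLex p).1 < (ofLex q).1) : ∃ g : ℚ ↪o Σₗ i, α i, ∀ r, g r ∈ Set.Ioo p q := by
  obtain ⟨j, hpj, hjq⟩ := exists_between h
  obtain ⟨k, hpk, hkj⟩ := exists_between hpj
  have : Nontrivial (Set.Ioo (ofLex p).1 (ofLex q).1) :=
    ⟨⟨j, hpj, hjq⟩, ⟨k, hpk, hkj.trans hjq⟩, fun h ↦ hkj.ne' (congrArg Subtype.val h)⟩
  obtain ⟨e⟩ : Nonempty (ℚ ↪o Set.Ioo (ofLex p).1 (ofLex q).1) :=
    Order.embedding_from_countable_to_dense _ _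
  refine ⟨OrderEmbedding.ofStrictMono (fun r ↦ toLex ⟨e r, Classical.arbitrary _⟩)
    fun r s hrs ↦ Sigma.Lex.lt_def.2 (Or.inl (e.strictMono hrs)), fun r ↦ ⟨?_, ?_⟩⟩
  · exact Sigma.Lex.lt_def.2 (Or.inl (e r).2.1)
  · exact Sigma.Lex.lt_def.2 (Or.inl (e r).2.2)

end Sigma.Lex

namespace OrderIso

open Sigma.Lex

variable {ι : Type*} [LinearOrder ι] [DenselyOrdered ι] {α β : ι → Type*}
  [∀ i, Preorder (α i)] [∀ i, Preorder (β i)]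

theorem sigmaLex_fst_apply_toLex_mk_le [∀ i, Nonempty (β i)] (f : (Σₗ i, α i) ≃o Σₗ i, β i)
    {i : ι} (hα : IsEmpty (ℚ ↪o α i)) (a b : α i) :
    (ofLex (f (toLex ⟨i, b⟩))).1 ≤ (ofLex (f (toLex ⟨i, a⟩))).1 := by
  by_contra! h
  obtain ⟨g, hg⟩ := exists_rat_embedding_forall_mem_Ioo h
  refine hα.elim' (nonempty_embedding_fiber_of_forall_mem_Ioo
    (g.trans f.symm.toOrderEmbedding) (a := a) (b := b) fun r ↦ ⟨?_, ?_⟩).some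
  · exact f.lt_symm_apply.2 (hg r).1
  · exact f.symm_apply_lt.2 (hg r).2

theorem sigmaLex_fst_apply_toLex_mk_eq [∀ i, Nonempty (β i)] (f : (Σₗ i, α i) ≃o Σₗ i, β i)
    {i : ι} (hα : IsEmpty (ℚ ↪o α i)) (a b : α i) :
    (ofLex (f (toLex ⟨i, a⟩))).1 = (ofLex (f (toLex ⟨i, b⟩))).1 :=
  (f.sigmaLex_fst_apply_toLex_mk_le hα b a).antisymm (f.sigmaLex_fst_apply_toLex_mk_le hα a b)

end OrderIso

open OrderIso Sigma.Lex in
/-- If `B` is a densely ordered linear order and `(M b)`, `(N b)` are families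
of nonempty scattered linear orders (no order embedding of `ℚ`), then every
order isomorphism `Σₗ (b : B), M b ≃o Σₗ (b : B), N b` maps fibers bijectively
onto fibers. -/
theorem orderIso_maps_fibers_onto_fibers (B : Type*) [LinearOrder B]
    [DenselyOrdered B]
    (M N : B → Type*) [∀ b, LinearOrder (M b)] [∀ b, LinearOrder (N b)]
    [∀ b, Nonempty (M b)] [∀ b, Nonempty (N b)]
    (hM : ∀ b, IsEmpty (ℚ ↪o M b)) (hN : ∀ b, IsEmpty (ℚ ↪o N b))
    (f : Lex (Σ b : B, M b) ≃o Lex (Σ b : B, N b)) :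
    ∀ b : B, ∃ c : B,
      (∀ x : M b, (ofLex (f (toLex ⟨b, x⟩))).1 = c) ∧
      (∀ y : N c, ∃ x : M b, f (toLex ⟨b, x⟩) = toLex ⟨c, y⟩) := by
  intro b
  obtain ⟨x₀⟩ : Nonempty (M b) := inferInstance
  obtain ⟨y₀, hy₀⟩ := exists_eq_toLex_mk (p := f (toLex ⟨b, x₀⟩)) rfl
  refine ⟨_, fun x ↦ f.sigmaLex_fst_apply_toLex_mk_eq (hM b) x x₀, fun y ↦ ?_⟩
  have hfiber : (ofLex (f.symm (toLex ⟨_, y⟩))).1 = b := by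
    rw [f.symm.sigmaLex_fst_apply_toLex_mk_eq (hN _) y y₀, ← hy₀, f.symm_apply_apply]
    rfl
  obtain ⟨x, hx⟩ := exists_eq_toLex_mk hfiber
  exact ⟨x, by rw [← hx, f.apply_symm_apply]⟩
end

section
/- A ℤ-indexed lexicographic sum of scattered linear orders is scattered: if (X i) for i : ℤ is a family of linear orders none of which admits an order embedding of ℚ, then Σₗ (i : ℤ), X i admits no order embedding of ℚ. -/
/-- A `ℤ`-indexed lexicographic sum of scattered linear orders is scattered:
if no `X i` admits an order embedding of `ℚ`, then neither does
`Σₗ (i : ℤ), X i`. -/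
theorem int_sum_scattered (X : ℤ → Type*) [∀ i, LinearOrder (X i)]
    (h : ∀ i, IsEmpty (ℚ ↪o X i)) :
    IsEmpty (ℚ ↪o Lex (Σ i : ℤ, X i)) := by
  constructor
  intro f
  set g : ℚ → ℤ := fun a => (f a).1 with hg
  have gmono : Monotone g := by
    intro a b hab
    rcases Sigma.Lex.le_def.1 (f.monotone hab) with h1 | ⟨h1, _⟩
    · exact h1.le
    · exact h1.le
  -- find q < r with g q = g r
  have key : ∃ q r : ℚ, q < r ∧ g q = g r := by
    by_contra hc
    push_neg at hc
    have gstrict : StrictMono g := fun a b hab =>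
      lt_of_le_of_ne (gmono hab.le) (hc a b hab)
    -- strictly monotone ℕ → ℚ sequence inside (0,1)
    have hs : StrictMono (fun n : ℕ => (1 : ℚ) - 1 / (n + 2)) := by
      intro m n hmn
      have : (1 : ℚ) / (n + 2) < 1 / (m + 2) := by
        apply one_div_lt_one_div_of_lt <;> [positivity; exact_mod_cast by omega]
      linarith
    have hlt : ∀ n : ℕ, (1 : ℚ) - 1 / (n + 2) < 1 := by
      intro n
      have : (0 : ℚ) < 1 / (n + 2) := by positivity
      linarith
    set G : ℕ → ℤ := fun n => g ((1 : ℚ) - 1 / (n + 2)) with hG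
    have Gstrict : StrictMono G := fun m n hmn => gstrict (hs hmn)
    have hbound : ∀ n : ℕ, G n < g 1 := fun n => gstrict (hlt n)
    have hgrow : ∀ n : ℕ, G 0 + n ≤ G n := by
      intro n
      induction n with
      | zero => simp
      | succ k ih =>
        have h2 : G k < G (k + 1) := Gstrict (by omega)
        omega
    have := hgrow (g 1 - G 0 + 1).toNat
    have := hbound (g 1 - G 0 + 1).toNat
    omega
  obtain ⟨q, r, hqr, hgqr⟩ := key
  set i : ℤ := g q with hi
  have hconst : ∀ a : ℚ, a ∈ Set.Ioo q r → g a = i := by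
    intro a ⟨h1, h2⟩
    have := gmono h1.le
    have := gmono h2.le
    omega
  -- build ℚ ↪o X i
  have : Nonempty (ℚ ≃o Set.Ioo q r) := by
    haveI : Nonempty (Set.Ioo q r) := Set.nonempty_Ioo_subtype hqr
    exact Order.iso_of_countable_dense ℚ (Set.Ioo q r)
  obtain ⟨e⟩ := this
  let F : (a : Set.Ioo q r) → X i := fun a =>
    cast (congrArg X (hconst a.1 a.2)) (f a.1).2
  have hF : ∀ a : Set.Ioo q r, (toLex ⟨i, F a⟩ : Σₗ j : ℤ, X j) = f a.1 := by
    intro a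
    show (⟨i, F a⟩ : Σ j : ℤ, X j) = ⟨(f a.1).1, (f a.1).2⟩
    exact Sigma.ext (hconst a.1 a.2).symm (cast_heq _ _)
  have Fstrict : StrictMono F := by
    intro a b hab
    have hlt : (toLex ⟨i, F a⟩ : Σₗ j : ℤ, X j) < toLex ⟨i, F b⟩ := by
      rw [hF a, hF b]; exact f.strictMono hab
    rcases Sigma.Lex.lt_def.1 hlt with h1 | ⟨h1, h2⟩
    · exact absurd h1 (lt_irrefl i)
    · exact h2
  exact (h i).false (e.toOrderEmbedding.trans (OrderEmbedding.ofStrictMono F Fstrict))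
end

section
/- If X is a nonempty linear order that lacks at least one endpoint (that is, X has no greatest element, or X has no least element), then X^ω is densely ordered: for all u < v in X^ω there exists w with u < w < v. -/
/-- If `X` is a nonempty linear order with no greatest element or no least
element, then `X^ω` (sequences `ℕ → X` ordered lexicographically) is densely
ordered. -/
theorem pow_omega_denselyOrdered (X : Type*) [LinearOrder X] [Nonempty X]
    (h : (¬ ∃ m : X, ∀ x : X, x ≤ m) ∨ (¬ ∃ m : X, ∀ x : X, m ≤ x)) :
    DenselyOrdered (Lex (ℕ → X)) := by
  constructor
  intro u v huv
  obtain ⟨n, hn, hlt⟩ : ∃ n, (∀ j, j < n → ofLex u j = ofLex v j) ∧ ofLex u n < ofLex v n := huv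
  rcases h with h | h
  · push_neg at h
    obtain ⟨b, hb⟩ := h (ofLex u (n + 1))
    refine ⟨toLex (Function.update (ofLex u) (n + 1) b), ?_, ?_⟩
    · exact ⟨n + 1, fun j hj => by
        simp [Pi.toLex_apply, Function.update_of_ne (Nat.ne_of_lt hj)], by
        simpa using hb⟩
    · exact ⟨n, fun j hj => by
        simp only [Pi.toLex_apply, Function.update_of_ne (by omega : j ≠ n + 1)]
        exact hn j hj, by
        simpa [Function.update_of_ne (by omega : n ≠ n + 1)] using hlt⟩
  · push_neg at h
    obtain ⟨b, hb⟩ := h (ofLex v (n + 1))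
    refine ⟨toLex (Function.update (ofLex v) (n + 1) b), ?_, ?_⟩
    · exact ⟨n, fun j hj => by
        simp only [Pi.toLex_apply, Function.update_of_ne (by omega : j ≠ n + 1)]
        exact hn j hj, by
        simpa [Function.update_of_ne (by omega : n ≠ n + 1)] using hlt⟩
    · exact ⟨n + 1, fun j hj => by
        simp [Pi.toLex_apply, Function.update_of_ne (Nat.ne_of_lt hj)], by
        simpa using hb⟩
end
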